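/- arXiv:1204.0027 — 10 statements merged into one kernel-verified Lean document; each statement's English description precedes it below -/
import Mathlib

section
/- If X is a non-compact, locally compact, metrizable space with a countable basis of compact open sets, then X can be written as a countable disjoint union of non-empty compact open subsets. -/
open MeasureTheory Topology ENNReal TopologicalSpace

/-- A set is compact open. -/
def IsCompactOpen {X : Type*} [TopologicalSpace X] (U : Set X) : Prop :=
  IsCompact U ∧ IsOpen U

/-- The defective set of a measure: points all of whose compact open
neighbourhoods have infinite measure. -/
def DefectiveSet {X : Type*} [TopologicalSpace X] [MeasurableSpace X]
    (μ : Measure X) : Set X :=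
  {x | ∀ U : Set X, IsCompactOpen U → x ∈ U → μ U = ⊤}

/-- A compact open set `V` is good for `μ`. -/
def GoodSet {X : Type*} [TopologicalSpace X] [MeasurableSpace X]
    (μ : Measure X) (V : Set X) : Prop :=
  ∀ U : Set X, IsCompactOpen U → μ U < μ V →
    ∃ W : Set X, W ⊆ V ∧ IsCompactOpen W ∧ μ W = μ U

/-- The measure `μ` is good: every compact open set is good for `μ`. -/
def Good {X : Type*} [TopologicalSpace X] [MeasurableSpace X]
    (μ : Measure X) : Prop :=
  ∀ V : Set X, IsCompactOpen V → GoodSet μ V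

/-- The restriction of `μ` to the (open) subset `A` is good: compact open
subsets of the subspace `A` are exactly compact open subsets of `X` contained
in `A`. -/
def GoodOn {X : Type*} [TopologicalSpace X] [MeasurableSpace X]
    (μ : Measure X) (A : Set X) : Prop :=
  ∀ U V : Set X, IsCompactOpen U → U ⊆ A → IsCompactOpen V → V ⊆ A → μ U < μ V →
    ∃ W : Set X, W ⊆ V ∧ IsCompactOpen W ∧ μ W = μ U

/-- The compact open values set, as a set of extended nonnegative reals. -/
def SE {X : Type*} [TopologicalSpace X] [MeasurableSpace X]
    (μ : Measure X) : Set ℝ≥0∞ :=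
  {v | v ≠ ⊤ ∧ ∃ U : Set X, IsCompactOpen U ∧ μ U = v}

/-- The compact open values set of the restriction of `μ` to `A`. -/
def SEOn {X : Type*} [TopologicalSpace X] [MeasurableSpace X]
    (μ : Measure X) (A : Set X) : Set ℝ≥0∞ :=
  {v | v ≠ ⊤ ∧ ∃ U : Set X, IsCompactOpen U ∧ U ⊆ A ∧ μ U = v}

/-- The compact open values set, as a set of reals. -/
def Sreal {X : Type*} [TopologicalSpace X] [MeasurableSpace X]
    (μ : Measure X) : Set ℝ :=
  {r | ∃ U : Set X, IsCompactOpen U ∧ μ U ≠ ⊤ ∧ (μ U).toReal = r}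

/-- The compact open values set of the restriction of `μ` to `A`, as reals. -/
def SrealOn {X : Type*} [TopologicalSpace X] [MeasurableSpace X]
    (μ : Measure X) (A : Set X) : Set ℝ :=
  {r | ∃ U : Set X, IsCompactOpen U ∧ U ⊆ A ∧ μ U ≠ ⊤ ∧ (μ U).toReal = r}

/-- A measure is full if every non-empty open set has positive measure. -/
def IsFull {X : Type*} [TopologicalSpace X] [MeasurableSpace X]
    (μ : Measure X) : Prop :=
  ∀ U : Set X, IsOpen U → U.Nonempty → 0 < μ U

/-- A measure is non-atomic if every singleton has measure zero. -/
def NonAtomic {X : Type*} [MeasurableSpace X] (μ : Measure X) : Prop :=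
  ∀ x : X, μ {x} = 0

/-- The space has a countable basis consisting of compact open sets. -/
def HasCompactOpenBasis (X : Type*) [TopologicalSpace X] : Prop :=
  ∃ B : Set (Set X), B.Countable ∧ TopologicalSpace.IsTopologicalBasis B ∧
    ∀ U ∈ B, IsCompact U ∧ IsOpen U

/-- The space has no isolated points. -/
def NoIsolatedPoints (X : Type*) [TopologicalSpace X] : Prop :=
  ∀ x : X, ¬ IsOpen ({x} : Set X)

/-!
Enumerate a countable basis of compact open sets as `g₀, g₁, …` and pass to the disjointed
sequence `gₙ \ (g₀ ∪ ⋯ ∪ gₙ₋₁)`. In a Hausdorff space compact sets are closed, so each piece is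
again compact open; the pieces still cover `X`. Infinitely many of them are non-empty, since
otherwise `X` would be a finite union of compact sets, so discarding the empty ones and
renumbering gives the partition.
-/

section

variable {X : Type*} [TopologicalSpace X]

theorem IsCompactOpen.diff [T2Space X] {U V : Set X} (hU : IsCompactOpen U)
    (hV : IsCompactOpen V) : IsCompactOpen (U \ V) :=
  ⟨hU.1.diff hV.2, hU.2.sdiff hV.1.isClosed⟩

theorem IsCompactOpen.disjointed [T2Space X] {ι : Type*} [Preorder ι] [LocallyFiniteOrderBot ι]
    {f : ι → Set X} (hf : ∀ i, IsCompactOpen (f i)) (i : ι) : IsCompactOpen (disjointed f i) :=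
  disjointedRec (fun _ j ht => ht.diff (hf j)) (hf i)

theorem HasCompactOpenBasis.exists_iUnion_eq_univ (hB : HasCompactOpenBasis X) :
    ∃ g : ℕ → Set X, (∀ n, IsCompactOpen (g n)) ∧ ⋃ n, g n = Set.univ := by
  obtain ⟨B, hBc, hBb, hBco⟩ := hB
  -- adding `∅` makes the family non-empty, so that it can be enumerated by `ℕ` even if `X = ∅`
  obtain ⟨g, hg⟩ := (hBc.insert ∅).exists_eq_range (Set.insert_nonempty _ _)
  refine ⟨g, fun n => ?_, ?_⟩
  · rcases (hg ▸ Set.mem_range_self n : g n ∈ insert ∅ B) with h | h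
    · exact h ▸ ⟨isCompact_empty, isOpen_empty⟩
    · exact hBco _ h
  · rw [← Set.sUnion_range, ← hg, Set.sUnion_insert, Set.empty_union, hBb.sUnion_eq]

theorem infinite_setOf_nonempty_of_iUnion_eq_univ [NoncompactSpace X] {ι : Type*}
    {f : ι → Set X} (hf : ∀ i, IsCompact (f i)) (hU : ⋃ i, f i = Set.univ) :
    {i | (f i).Nonempty}.Infinite := by
  intro hfin
  refine noncompact_univ X ?_
  have hU' : ⋃ i ∈ {i | (f i).Nonempty}, f i = Set.univ := by
    rw [← hU]
    ext x
    simp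
  exact hU' ▸ hfin.isCompact_biUnion fun i _ => hf i

end

theorem Set.iUnion_comp_nth_nonempty {α : Type*} {f : ℕ → Set α}
    (hinf : {n | (f n).Nonempty}.Infinite) :
    ⋃ k, f (Nat.nth (fun n => (f n).Nonempty) k) = ⋃ n, f n := by
  refine Set.Subset.antisymm (Set.iUnion_subset fun k => Set.subset_iUnion f _) ?_
  refine Set.iUnion_subset fun n x hx => ?_
  obtain ⟨k, hk⟩ : n ∈ Set.range (Nat.nth fun n => (f n).Nonempty) := by
    rw [Nat.range_nth_of_infinite hinf]
    exact ⟨x, hx⟩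
  exact Set.mem_iUnion.2 ⟨k, hk ▸ hx⟩

theorem stmt0_general {X : Type*} [TopologicalSpace X] [MetrizableSpace X]
    [NoncompactSpace X] (hB : HasCompactOpenBasis X) :
    ∃ f : ℕ → Set X, (∀ n, IsCompactOpen (f n) ∧ (f n).Nonempty) ∧
      Pairwise (Function.onFun Disjoint f) ∧ (⋃ n, f n) = Set.univ := by
  obtain ⟨g, hg, hgU⟩ := hB.exists_iUnion_eq_univ
  have hf : ∀ n, IsCompactOpen (disjointed g n) := IsCompactOpen.disjointed hg
  have hfU : ⋃ n, disjointed g n = Set.univ := iUnion_disjointed.trans hgU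
  have hinf := infinite_setOf_nonempty_of_iUnion_eq_univ (fun n => (hf n).1) hfU
  refine ⟨disjointed g ∘ Nat.nth (fun n => (disjointed g n).Nonempty),
    fun k => ⟨hf _, Nat.nth_mem_of_infinite hinf k⟩,
    (disjoint_disjointed g).comp_of_injective (Nat.nth_injective hinf), ?_⟩
  rw [Function.comp_def, Set.iUnion_comp_nth_nonempty hinf, hfU]

theorem stmt0 {X : Type*} [TopologicalSpace X] [MetrizableSpace X]
    [LocallyCompactSpace X] [NoncompactSpace X] (hB : HasCompactOpenBasis X) :
    ∃ f : ℕ → Set X, (∀ n, IsCompactOpen (f n) ∧ (f n).Nonempty) ∧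
      Pairwise (Function.onFun Disjoint f) ∧ (⋃ n, f n) = Set.univ :=
  stmt0_general hB
end

section
/- Let μ be a full non-atomic Borel measure on a non-compact locally compact Cantor set X with μ(𝔐_μ) = 0. If U is a compact open set with μ(U) = ∞, then for every a > 0 there exists a compact open subset V ⊆ U with a ≤ μ(V) < ∞. -/
open MeasureTheory Topology ENNReal TopologicalSpace

/-
Away from the null set `𝔐_μ` every point of `U` has a compact open neighbourhood of finite
measure, so `U` is covered, up to a null set, by the countably many basic compact open subsets of
`U` of finite measure. Their union has infinite measure, so by continuity from below some finite
union of them already has measure at least `a`; a finite union of compact open sets of finite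
measure is again compact open of finite measure.
-/

theorem Set.Finite.isCompactOpen_sUnion {X : Type*} [TopologicalSpace X] {S : Set (Set X)}
    (hS : S.Finite) (h : ∀ s ∈ S, IsCompactOpen s) : IsCompactOpen (⋃₀ S) :=
  ⟨hS.isCompact_sUnion fun s hs => (h s hs).1, isOpen_sUnion fun s hs => (h s hs).2⟩

theorem MeasureTheory.exists_finset_lt_measure_sUnion {α : Type*} [MeasurableSpace α]
    {μ : Measure α} {C : Set (Set α)} (hC : C.Countable) {a : ℝ≥0∞} (ha : a < μ (⋃₀ C)) :
    ∃ t : Finset (Set α), ↑t ⊆ C ∧ a < μ (⋃₀ ↑t) := by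
  obtain rfl | hne := C.eq_empty_or_nonempty
  · simp at ha
  obtain ⟨f, rfl⟩ := hC.exists_eq_range hne
  rw [Set.sUnion_range, measure_iUnion_eq_iSup_accumulate, lt_iSup_iff] at ha
  obtain ⟨n, hn⟩ := ha
  refine ⟨(Finset.Iic n).image f, by simp, ?_⟩
  simpa [Set.accumulate_def] using hn

theorem diff_defectiveSet_subset_sUnion {X : Type*} [TopologicalSpace X] [MeasurableSpace X]
    (μ : Measure X) {𝔅 : Set (Set X)} (h𝔅 : IsTopologicalBasis 𝔅) {U : Set X} (hU : IsOpen U) :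
    U \ DefectiveSet μ ⊆ ⋃₀ {B ∈ 𝔅 | B ⊆ U ∧ μ B ≠ ⊤} := by
  rintro x ⟨hxU, hx⟩
  simp only [DefectiveSet, Set.mem_ofPred_eq, not_forall] at hx
  obtain ⟨N, hN, hxN, hμN⟩ := hx
  obtain ⟨B, hB𝔅, hxB, hBNU⟩ :=
    h𝔅.exists_subset_of_mem_open (Set.mem_inter hxN hxU) (hN.2.inter hU)
  exact ⟨B, ⟨hB𝔅, fun y hy => (hBNU hy).2,
    ne_top_of_le_ne_top hμN (measure_mono fun y hy => (hBNU hy).1)⟩, hxB⟩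

theorem stmt3_general {X : Type*} [TopologicalSpace X] [MeasurableSpace X]
    (hB : HasCompactOpenBasis X)
    (μ : Measure X)
    (h0 : μ (DefectiveSet μ) = 0)
    (U : Set X) (hU : IsCompactOpen U) (hUinf : μ U = ⊤) (a : ℝ) :
    ∃ V : Set X, V ⊆ U ∧ IsCompactOpen V ∧ ENNReal.ofReal a ≤ μ V ∧ μ V ≠ ⊤ := by
  obtain ⟨𝔅, h𝔅c, h𝔅b, h𝔅co⟩ := hB
  set C := {B ∈ 𝔅 | B ⊆ U ∧ μ B ≠ ⊤}
  have hCinf : μ (⋃₀ C) = ⊤ := by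
    rw [← top_le_iff, ← hUinf, ← measure_sdiff_null h0]
    exact measure_mono (diff_defectiveSet_subset_sUnion μ h𝔅b hU.2)
  obtain ⟨t, htC, hat⟩ := exists_finset_lt_measure_sUnion (μ := μ) (h𝔅c.mono fun B hB => hB.1)
    (hCinf ▸ ofReal_lt_top : ENNReal.ofReal a < μ (⋃₀ C))
  refine ⟨⋃₀ ↑t, Set.sUnion_subset fun B hB => (htC hB).2.1,
    t.finite_toSet.isCompactOpen_sUnion fun B hB => h𝔅co B (htC hB).1, hat.le, ?_⟩
  rw [Set.sUnion_eq_biUnion]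
  exact (measure_biUnion_lt_top t.finite_toSet fun B hB => (htC hB).2.2.lt_top).ne

theorem stmt3 {X : Type*} [TopologicalSpace X] [MeasurableSpace X] [BorelSpace X]
    [MetrizableSpace X] [LocallyCompactSpace X] [TotallyDisconnectedSpace X]
    [NoncompactSpace X] (hB : HasCompactOpenBasis X) (hni : NoIsolatedPoints X)
    (μ : Measure X) (hfull : IsFull μ) (hna : NonAtomic μ)
    (h0 : μ (DefectiveSet μ) = 0)
    (U : Set X) (hU : IsCompactOpen U) (hUinf : μ U = ⊤) (a : ℝ) (ha : 0 < a) :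
    ∃ V : Set X, V ⊆ U ∧ IsCompactOpen V ∧ ENNReal.ofReal a ≤ μ V ∧ μ V ≠ ⊤ :=
  stmt3_general hB μ h0 U hU hUinf a
end

section
/- Let μ be a full non-atomic Borel measure on a non-compact locally compact Cantor set X with μ(𝔐_μ) = 0. Then μ is σ-finite: X is the union of countably many Borel sets of finite μ-measure. -/
open MeasureTheory Topology ENNReal TopologicalSpace

theorem stmt5 {X : Type*} [TopologicalSpace X] [MeasurableSpace X] [BorelSpace X]
    [MetrizableSpace X] [LocallyCompactSpace X] [TotallyDisconnectedSpace X]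
    [NoncompactSpace X] (hB : HasCompactOpenBasis X) (hni : NoIsolatedPoints X)
    (μ : Measure X) (hfull : IsFull μ) (hna : NonAtomic μ)
    (h0 : μ (DefectiveSet μ) = 0) :
    ∃ F : ℕ → Set X, (∀ n, MeasurableSet (F n) ∧ μ (F n) ≠ ⊤) ∧
      (⋃ n, F n) = Set.univ := by
  obtain ⟨B, hBc, hBbasis, hBco⟩ := hB
  set S : Set (Set X) := {U ∈ B | μ U ≠ ⊤} ∪ {∅} with hS
  have hSc : S.Countable :=
    (hBc.mono (Set.sep_subset _ _)).union (Set.countable_singleton _)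
  obtain ⟨f, hf⟩ := hSc.exists_eq_range ⟨∅, Or.inr rfl⟩
  have hmem : ∀ n, f n ∈ S := fun n => hf ▸ ⟨n, rfl⟩
  have hDclosed : IsClosed (DefectiveSet μ) := by
    rw [← isOpen_compl_iff, isOpen_iff_forall_mem_open]
    intro x hx
    simp only [DefectiveSet, Set.mem_compl_iff, Set.mem_setOf_eq] at hx
    push_neg at hx
    obtain ⟨U, hU, hxU, hUtop⟩ := hx
    exact ⟨U, fun y hy h => hUtop (h U hU hy), hU.2, hxU⟩
  refine ⟨fun n => match n with | 0 => DefectiveSet μ | (k+1) => f k, ?_, ?_⟩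
  · rintro (_ | k)
    · exact ⟨hDclosed.measurableSet, by simp [h0]⟩
    · rcases hmem k with ⟨hkB, hk⟩ | hk
      · exact ⟨(hBco _ hkB).2.measurableSet, hk⟩
      · simp only [Set.mem_singleton_iff] at hk
        simp [hk]
  · ext x
    simp only [Set.mem_iUnion, Set.mem_univ, iff_true]
    by_cases hx : x ∈ DefectiveSet μ
    · exact ⟨0, hx⟩
    · simp only [DefectiveSet, Set.mem_setOf_eq] at hx
      push_neg at hx
      obtain ⟨U, hU, hxU, hUtop⟩ := hx
      obtain ⟨V, hVB, hxV, hVU⟩ := hBbasis.exists_subset_of_mem_open hxU hU.2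
      have hV : V ∈ S := Or.inl ⟨hVB, fun h => hUtop (top_le_iff.mp (h ▸ measure_mono hVU))⟩
      rw [hf] at hV
      obtain ⟨k, hk⟩ := hV
      exact ⟨k + 1, show x ∈ f k from hk ▸ hxV⟩
end

section
/- Let μ be a full non-atomic Borel measure on a locally compact Cantor set X with μ(𝔐_μ) = 0. If every compact open subset of X of finite μ-measure is good for μ, then μ is good (every compact open subset is good). -/
open MeasureTheory Topology ENNReal TopologicalSpace

/-!
Off the null defective set, every point of a compact open `V` lies in a basic compact open set of
finite measure inside `V`. There are countably many of these, so by continuity from below the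
measures of their finite unions approach `μ V`. Hence any `U` with `μ U < μ V` already satisfies
`μ U < μ K` for a compact open `K ⊆ V` of finite measure, and `K` being good produces `W`.
-/

theorem MeasureTheory.exists_finite_subset_lt_measure_sUnion {α : Type*} [MeasurableSpace α]
    {μ : Measure α} {𝒞 : Set (Set α)} (h𝒞 : 𝒞.Countable) {c : ℝ≥0∞} (hc : c < μ (⋃₀ 𝒞)) :
    ∃ F ⊆ 𝒞, F.Finite ∧ c < μ (⋃₀ F) := by
  have hunion : ⋃₀ 𝒞 = ⋃ F ∈ {F : Set (Set α) | F.Finite ∧ F ⊆ 𝒞}, ⋃₀ F := by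
    refine subset_antisymm (fun x hx => ?_) (Set.iUnion₂_subset fun F hF => Set.sUnion_mono hF.2)
    obtain ⟨s, hs𝒞, hxs⟩ := Set.mem_sUnion.1 hx
    exact Set.mem_biUnion ⟨Set.finite_singleton s, Set.singleton_subset_iff.2 hs𝒞⟩ (by simpa)
  have hdir :
      DirectedOn (Function.onFun (· ⊆ ·) Set.sUnion) {F : Set (Set α) | F.Finite ∧ F ⊆ 𝒞} :=
    fun F hF G hG => ⟨F ∪ G, ⟨hF.1.union hG.1, Set.union_subset hF.2 hG.2⟩,
      Set.sUnion_mono Set.subset_union_left, Set.sUnion_mono Set.subset_union_right⟩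
  rw [hunion, measure_biUnion_eq_iSup (Set.countable_ofPred_finite_subset h𝒞) hdir] at hc
  obtain ⟨F, ⟨hFfin, hF𝒞⟩, hcF⟩ := lt_biSup_iff.1 hc
  exact ⟨F, hF𝒞, hFfin, hcF⟩

section DefectiveSet

variable {X : Type*} [TopologicalSpace X] [MeasurableSpace X] {μ : Measure X}

theorem sdiff_defectiveSet_subset_sUnion {B : Set (Set X)} (hB : IsTopologicalBasis B)
    {V : Set X} (hV : IsOpen V) :
    V \ DefectiveSet μ ⊆ ⋃₀ {b ∈ B | b ⊆ V ∧ μ b ≠ ⊤} := by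
  rintro x ⟨hxV, hxD⟩
  simp only [DefectiveSet, Set.mem_ofPred_eq, not_forall] at hxD
  obtain ⟨U, hU, hxU, hUfin⟩ := hxD
  obtain ⟨b, hbB, hxb, hbUV⟩ :=
    hB.exists_subset_of_mem_open (Set.mem_inter hxU hxV) (hU.2.inter hV)
  refine ⟨b, ⟨hbB, hbUV.trans Set.inter_subset_right, ?_⟩, hxb⟩
  exact ne_top_of_le_ne_top hUfin (measure_mono (hbUV.trans Set.inter_subset_left))

theorem exists_isCompactOpen_subset_lt_measure (hB : HasCompactOpenBasis X)
    (h0 : μ (DefectiveSet μ) = 0) {V : Set X} (hV : IsOpen V) {c : ℝ≥0∞} (hc : c < μ V) :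
    ∃ K ⊆ V, IsCompactOpen K ∧ μ K ≠ ⊤ ∧ c < μ K := by
  obtain ⟨B, hBcount, hBbasis, hBco⟩ := hB
  set 𝒞 := {b ∈ B | b ⊆ V ∧ μ b ≠ ⊤}
  have hc𝒞 : c < μ (⋃₀ 𝒞) := hc.trans_le <| by
    rw [← measure_sdiff_null h0]
    exact measure_mono (sdiff_defectiveSet_subset_sUnion hBbasis hV)
  obtain ⟨F, hF𝒞, hFfin, hcF⟩ :=
    exists_finite_subset_lt_measure_sUnion (hBcount.mono fun b hb => hb.1) hc𝒞
  refine ⟨⋃₀ F, Set.sUnion_subset fun b hb => (hF𝒞 hb).2.1, ⟨?_, ?_⟩, ?_, hcF⟩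
  · exact hFfin.isCompact_sUnion fun b hb => (hBco b (hF𝒞 hb).1).1
  · exact isOpen_sUnion fun b hb => (hBco b (hF𝒞 hb).1).2
  · rw [Set.sUnion_eq_biUnion]
    exact (measure_biUnion_lt_top hFfin fun b hb => (hF𝒞 hb).2.2.lt_top).ne

end DefectiveSet

theorem stmt9_general {X : Type*} [TopologicalSpace X] [MeasurableSpace X]
    (hB : HasCompactOpenBasis X)
    (μ : Measure X)
    (h0 : μ (DefectiveSet μ) = 0)
    (h : ∀ V : Set X, IsCompactOpen V → μ V ≠ ⊤ → GoodSet μ V) :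
    Good μ := by
  intro V hV U hU hUV
  obtain ⟨K, hKV, hK, hKfin, hUK⟩ := exists_isCompactOpen_subset_lt_measure hB h0 hV.2 hUV
  obtain ⟨W, hWK, hW, hWU⟩ := h K hK hKfin U hU hUK
  exact ⟨W, hWK.trans hKV, hW, hWU⟩

theorem stmt9 {X : Type*} [TopologicalSpace X] [MeasurableSpace X] [BorelSpace X]
    [MetrizableSpace X] [LocallyCompactSpace X] [TotallyDisconnectedSpace X]
    (hB : HasCompactOpenBasis X) (hni : NoIsolatedPoints X)
    (μ : Measure X) (hfull : IsFull μ) (hna : NonAtomic μ)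
    (h0 : μ (DefectiveSet μ) = 0)
    (h : ∀ V : Set X, IsCompactOpen V → μ V ≠ ⊤ → GoodSet μ V) :
    Good μ :=
  stmt9_general hB μ h0 h
end

section
/- Let μ be a good full non-atomic Borel measure on a locally compact Cantor set X. Then the compact open values set S(μ) is group-like: for all α, β ∈ S(μ) with α ≤ β, one has β − α ∈ S(μ). -/
open MeasureTheory Topology ENNReal TopologicalSpace

theorem stmt10 {X : Type*} [TopologicalSpace X] [MeasurableSpace X] [BorelSpace X]
    [MetrizableSpace X] [LocallyCompactSpace X] [TotallyDisconnectedSpace X]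
    (hB : HasCompactOpenBasis X) (hni : NoIsolatedPoints X)
    (μ : Measure X) (hfull : IsFull μ) (hna : NonAtomic μ) (hg : Good μ) :
    ∀ α ∈ SE μ, ∀ β ∈ SE μ, α ≤ β → β - α ∈ SE μ := by
  rintro α ⟨hα, U, hU, hUα⟩ β ⟨hβ, V, hV, hVβ⟩ hle
  rcases eq_or_lt_of_le hle with rfl | hlt
  · refine ⟨by simp [tsub_self], ∅, ⟨isCompact_empty, isOpen_empty⟩, by simp⟩
  · obtain ⟨W, hWV, hW, hWα⟩ := hg V hV U hU (by rw [hUα, hVβ]; exact hlt)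
    refine ⟨?_, V \ W, ⟨?_, ?_⟩, ?_⟩
    · exact ne_top_of_le_ne_top hβ tsub_le_self
    · exact hV.1.diff hW.2
    · exact hV.2.sdiff hW.1.isClosed
    · rw [measure_diff hWV hW.2.measurableSet.nullMeasurableSet
        (by rw [hWα, hUα]; exact hα), hWα, hUα, hVβ]
end

section
/- Let μ be a full non-atomic Borel measure on a locally compact Cantor set X with μ(𝔐_μ) = 0. If a compact open set U admits a finite partition into compact open subsets each of which is good for μ, then U is good for μ. -/
open MeasureTheory Topology ENNReal TopologicalSpace

/-! By induction on the number of pieces it suffices to join two disjoint good sets `V₁`, `V₂`.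
Given a compact open `A` with `μ A < μ V₁ + μ V₂` that fits into neither piece, cut out a
compact open `B ⊆ A` with `μ A - μ V₁ < μ B < μ V₂`; then `B` is matched inside `V₂` and `A \ B`
inside `V₁`. Such a `B` exists because, `μ` being non-atomic, `A` is covered by finitely many
compact open sets of measure less than `μ V₂ - (μ A - μ V₁)`, and adding them one at a time
raises the measure in steps smaller than that gap. -/

section

variable {X : Type*} [TopologicalSpace X]

theorem IsCompactOpen.union {U V : Set X} (hU : IsCompactOpen U) (hV : IsCompactOpen V) :
    IsCompactOpen (U ∪ V) :=
  ⟨hU.1.union hV.1, hU.2.union hV.2⟩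

theorem IsCompactOpen.sUnion {S : Set (Set X)} (hS : S.Finite) (h : ∀ U ∈ S, IsCompactOpen U) :
    IsCompactOpen (⋃₀ S) :=
  ⟨hS.isCompact_sUnion fun U hU => (h U hU).1, isOpen_sUnion fun U hU => (h U hU).2⟩

theorem IsCompactOpen.measurableSet [MeasurableSpace X] [OpensMeasurableSpace X] {U : Set X}
    (hU : IsCompactOpen U) : MeasurableSet U :=
  hU.2.measurableSet

end

theorem exists_mem_nhds_measure_lt {X : Type*} [TopologicalSpace X] [T1Space X]
    [FirstCountableTopology X] [MeasurableSpace X] [OpensMeasurableSpace X] {μ : Measure X}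
    {x : X} (hx : μ {x} = 0) {A : Set X} (hA : A ∈ 𝓝 x) (hAfin : μ A ≠ ∞) {ε : ℝ≥0∞}
    (hε : 0 < ε) : ∃ N ∈ 𝓝 x, μ N < ε := by
  obtain ⟨s, hs⟩ := (nhds_basis_opens x).exists_antitone_subbasis
  set u : ℕ → Set X := fun n => s n ∩ interior A
  have hu_open : ∀ n, IsOpen (u n) := fun n => (hs.1 n).2.inter isOpen_interior
  have hu_anti : Antitone u := fun m n hmn => Set.inter_subset_inter_left _ (hs.2.antitone hmn)
  have hu_fin : μ (u 0) ≠ ∞ :=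
    ne_top_of_le_ne_top hAfin (measure_mono (Set.inter_subset_right.trans interior_subset))
  have hu_inter : μ (⋂ n, u n) = 0 := by
    refine measure_mono_null (fun y hy => ?_) hx
    rw [← biInter_basis_nhds hs.2.toHasBasis]
    exact Set.mem_iInter₂.2 fun n _ => (Set.mem_iInter.1 hy n).1
  have hlim := tendsto_measure_iInter_atTop (μ := μ)
    (fun n => (hu_open n).measurableSet.nullMeasurableSet) hu_anti ⟨0, hu_fin⟩
  rw [hu_inter] at hlim
  obtain ⟨n, hn⟩ := (hlim.eventually (gt_mem_nhds hε)).exists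
  exact ⟨u n, Filter.inter_mem (hs.2.mem n) (interior_mem_nhds.2 hA), hn⟩

theorem exists_subset_measure_sUnion_mem_Ioo {α : Type*} [MeasurableSpace α] (μ : Measure α)
    {ε t : ℝ≥0∞} (F : Finset (Set α)) (hF : ∀ N ∈ F, μ N < ε) (ht : t < μ (⋃₀ ↑F)) :
    ∃ G ⊆ F, t < μ (⋃₀ ↑G) ∧ μ (⋃₀ ↑G) < t + ε := by
  classical
  induction F using Finset.induction_on with
  | empty => simp at ht
  | insert N F _ ih =>
    by_cases hF' : t < μ (⋃₀ ↑F)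
    · obtain ⟨G, hGF, hG⟩ := ih (fun M hM => hF M (Finset.mem_insert_of_mem hM)) hF'
      exact ⟨G, hGF.trans (Finset.subset_insert N F), hG⟩
    rw [not_lt] at hF'
    refine ⟨insert N F, subset_rfl, ht, ?_⟩
    calc μ (⋃₀ ↑(insert N F)) ≤ μ (⋃₀ ↑F) + μ N := by
          rw [Finset.coe_insert, Set.sUnion_insert, Set.union_comm]
          exact measure_union_le _ _
      _ < t + ε := ENNReal.add_lt_add_of_le_of_lt (ne_top_of_le_ne_top ht.ne_top hF') hF'
          (hF N (Finset.mem_insert_self N F))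

section

variable {X : Type*} [TopologicalSpace X] [T2Space X] [MeasurableSpace X]
  [OpensMeasurableSpace X] {μ : Measure X}

theorem exists_isCompactOpen_subset_measure_mem_Ioo (hB : HasCompactOpenBasis X)
    (hna : NonAtomic μ) {A : Set X} (hA : IsCompactOpen A) {s t : ℝ≥0∞} (hts : t < s)
    (hsA : s ≤ μ A) (hAfin : μ A ≠ ∞) :
    ∃ B ⊆ A, IsCompactOpen B ∧ t < μ B ∧ μ B < s := by
  obtain ⟨C, hCcount, hCbasis, hCco⟩ := hB
  have := hCbasis.secondCountableTopology hCcount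
  have hsmall : ∀ x ∈ A, ∃ N, IsCompactOpen N ∧ x ∈ N ∧ N ⊆ A ∧ μ N < s - t := by
    intro x hx
    obtain ⟨M, hM, hMμ⟩ := exists_mem_nhds_measure_lt (hna x) (hA.2.mem_nhds hx) hAfin
      (tsub_pos_of_lt hts)
    obtain ⟨N, hNC, hxN, hNsub⟩ :=
      hCbasis.mem_nhds_iff.1 (Filter.inter_mem hM (hA.2.mem_nhds hx))
    exact ⟨N, hCco N hNC, hxN, hNsub.trans Set.inter_subset_right,
      (measure_mono (hNsub.trans Set.inter_subset_left)).trans_lt hMμ⟩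
  choose! N hNco hxN hNA hNμ using hsmall
  obtain ⟨I, hIA, hAcover⟩ := hA.1.elim_nhds_subcover N
    fun x hx => (hNco x hx).2.mem_nhds (hxN x hx)
  have hF : ∀ M ∈ I.image N, IsCompactOpen M ∧ M ⊆ A ∧ μ M < s - t := by
    simp only [Finset.mem_image]
    rintro _ ⟨x, hx, rfl⟩
    exact ⟨hNco x (hIA x hx), hNA x (hIA x hx), hNμ x (hIA x hx)⟩
  have ht : t < μ (⋃₀ ↑(I.image N)) := by
    refine hts.trans_le (hsA.trans (measure_mono fun y hy => ?_))
    obtain ⟨x, hx, hyx⟩ := Set.mem_iUnion₂.1 (hAcover hy)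
    exact ⟨N x, Finset.mem_coe.2 (Finset.mem_image_of_mem N hx), hyx⟩
  obtain ⟨G, hGF, hGt, hGs⟩ :=
    exists_subset_measure_sUnion_mem_Ioo μ (I.image N) (fun M hM => (hF M hM).2.2) ht
  rw [add_tsub_cancel_of_le hts.le] at hGs
  exact ⟨⋃₀ ↑G, Set.sUnion_subset fun M hM => (hF M (hGF hM)).2.1,
    IsCompactOpen.sUnion G.finite_toSet fun M hM => (hF M (hGF hM)).1, hGt, hGs⟩

theorem GoodSet.union (hB : HasCompactOpenBasis X) (hna : NonAtomic μ) {V₁ V₂ : Set X}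
    (h₁ : GoodSet μ V₁) (h₂ : GoodSet μ V₂) (hV₂ : MeasurableSet V₂) (hd : Disjoint V₁ V₂) :
    GoodSet μ (V₁ ∪ V₂) := by
  intro A hA hAlt
  rw [measure_union hd hV₂] at hAlt
  by_cases hA₁ : μ A < μ V₁
  · obtain ⟨W, hWV, hW⟩ := h₁ A hA hA₁
    exact ⟨W, hWV.trans Set.subset_union_left, hW⟩
  by_cases hA₂ : μ A < μ V₂
  · obtain ⟨W, hWV, hW⟩ := h₂ A hA hA₂
    exact ⟨W, hWV.trans Set.subset_union_right, hW⟩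
  rw [not_lt] at hA₁ hA₂
  have hAfin : μ A ≠ ∞ := hAlt.ne_top
  have hV₁fin : μ V₁ ≠ ∞ := ne_top_of_le_ne_top hAfin hA₁
  obtain ⟨B, hBA, hBco, hBlow, hBhigh⟩ := exists_isCompactOpen_subset_measure_mem_Ioo hB hna hA
    ((ENNReal.sub_lt_iff_lt_right hV₁fin hA₁).2 (add_comm (μ V₁) _ ▸ hAlt)) hA₂ hAfin
  have hBfin : μ B ≠ ∞ := hBhigh.ne_top
  have hAB : μ (A \ B) + μ B = μ A := by
    rw [← measure_union Set.disjoint_sdiff_left hBco.measurableSet, Set.sdiff_union_of_subset hBA]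
  have hABlt : μ (A \ B) < μ V₁ := by
    rw [← ENNReal.add_lt_add_iff_right hBfin, hAB, add_comm,
      ← ENNReal.sub_lt_iff_lt_right hV₁fin hA₁]
    exact hBlow
  obtain ⟨W₁, hW₁V, hW₁, hW₁μ⟩ := h₁ (A \ B) (hA.diff hBco) hABlt
  obtain ⟨W₂, hW₂V, hW₂, hW₂μ⟩ := h₂ B hBco hBhigh
  refine ⟨W₁ ∪ W₂, Set.union_subset_union hW₁V hW₂V, hW₁.union hW₂, ?_⟩
  rw [measure_union (hd.mono hW₁V hW₂V) hW₂.measurableSet, hW₁μ, hW₂μ, hAB]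

theorem GoodSet.biUnion_finset (hB : HasCompactOpenBasis X) (hna : NonAtomic μ) {ι : Type*}
    {P : ι → Set X} (I : Finset ι) (hP : ∀ i ∈ I, GoodSet μ (P i))
    (hPm : ∀ i ∈ I, MeasurableSet (P i)) (hd : (I : Set ι).PairwiseDisjoint P) :
    GoodSet μ (⋃ i ∈ I, P i) := by
  classical
  induction I using Finset.induction_on with
  | empty => simp [GoodSet]
  | insert a I haI ih =>
    rw [Finset.coe_insert, Set.pairwiseDisjoint_insert_of_notMem (Finset.mem_coe.not.2 haI)] at hd
    rw [Finset.set_biUnion_insert]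
    refine (hP a (Finset.mem_insert_self a I)).union hB hna
      (ih (fun i hi => hP i (Finset.mem_insert_of_mem hi))
        (fun i hi => hPm i (Finset.mem_insert_of_mem hi)) hd.1) ?_ ?_
    · exact Finset.measurableSet_biUnion I fun i hi => hPm i (Finset.mem_insert_of_mem hi)
    · exact Set.disjoint_iUnion₂_right.2 hd.2

theorem GoodSet.iUnion (hB : HasCompactOpenBasis X) (hna : NonAtomic μ) {ι : Type*} [Finite ι]
    {P : ι → Set X} (hP : ∀ i, GoodSet μ (P i)) (hPm : ∀ i, MeasurableSet (P i))
    (hd : Pairwise (Function.onFun Disjoint P)) : GoodSet μ (⋃ i, P i) := by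
  cases nonempty_fintype ι
  simpa using GoodSet.biUnion_finset hB hna Finset.univ (fun i _ => hP i) (fun i _ => hPm i)
    (hd.set_pairwise _)

end

theorem stmt11_general {X : Type*} [TopologicalSpace X] [MeasurableSpace X] [BorelSpace X]
    [MetrizableSpace X]
    (hB : HasCompactOpenBasis X)
    (μ : Measure X) (hna : NonAtomic μ)
    (U : Set X) (n : ℕ) (P : Fin n → Set X)
    (hP : ∀ i, IsCompactOpen (P i) ∧ GoodSet μ (P i))
    (hdisj : Pairwise (Function.onFun Disjoint P))
    (hcover : (⋃ i, P i) = U) :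
    GoodSet μ U :=
  hcover ▸ GoodSet.iUnion hB hna (fun i => (hP i).2) (fun i => (hP i).1.measurableSet) hdisj

theorem stmt11 {X : Type*} [TopologicalSpace X] [MeasurableSpace X] [BorelSpace X]
    [MetrizableSpace X] [LocallyCompactSpace X] [TotallyDisconnectedSpace X]
    (hB : HasCompactOpenBasis X) (hni : NoIsolatedPoints X)
    (μ : Measure X) (hfull : IsFull μ) (hna : NonAtomic μ)
    (h0 : μ (DefectiveSet μ) = 0)
    (U : Set X) (hU : IsCompactOpen U) (n : ℕ) (P : Fin n → Set X)
    (hP : ∀ i, IsCompactOpen (P i) ∧ GoodSet μ (P i))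
    (hdisj : Pairwise (Function.onFun Disjoint P))
    (hcover : (⋃ i, P i) = U) :
    GoodSet μ U :=
  stmt11_general hB μ hna U n P hP hdisj hcover
end

section
/- For every countable dense group-like subset D of [0,1), there exists a non-compact locally compact Cantor set X and a good full non-atomic Borel probability measure μ on X with S(μ) = D. -/
open MeasureTheory Topology ENNReal TopologicalSpace

/-!
Choose summable weights `w`, positive exactly on `D \ {0}`, and let `F t = t + ∑_{d ≤ t} w d`.
The space `X` is the closure of `F '' [0, 1)` in `[0, F 1)`: the jump of `F` at `d ∈ D \ {0}`
splits `d` into the two points `F d - w d` and `F d`, which makes the sets corresponding to the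
intervals `[a, b)` with `a, b ∈ D` compact and open, and these form a basis. The measure `μ` is
the image of Lebesgue measure on `[0, 1)`. A compact open set is a finite union of basic sets,
so by inclusion–exclusion its measure lies in `G`, and it is `< 1` because `X` is not compact.
For goodness, cut `V` at the first parameter `t` at which the part of `V` below `t` has measure
`μ U`: just below `t` the parameters of the points of `V` fill an interval `[a, t)` with
`a ∈ D`, which forces `t ∈ G`, hence `t ∈ D`.
-/

open Set Filter

section JumpFunction

variable {w : ℝ → ℝ}

theorem tendsto_tsum_indicator_zero {α : Type*} {l : Filter α} {S : α → Set ℝ}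
    (hw : 0 ≤ w) (hws : Summable w) (hS : ∀ d, ∀ᶠ u in l, d ∉ S u) :
    Tendsto (fun u => ∑' d, (S u).indicator w d) l (𝓝 0) := by
  have := tendsto_tsum_of_dominated_convergence (𝓕 := l) (g := fun _ => (0 : ℝ)) hws
    (fun d => tendsto_const_nhds.congr' <| (hS d).mono fun u hu => (indicator_of_notMem hu w).symm)
    (Eventually.of_forall fun u d => by
      rw [Real.norm_eq_abs, abs_of_nonneg (indicator_nonneg (fun d _ => hw d) d)]
      exact indicator_le_self' (fun d _ => hw d) d)
  simpa using this

noncomputable def jumpFun (w : ℝ → ℝ) (t : ℝ) : ℝ := t + ∑' d, (Iic t).indicator w d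

theorem jumpFun_sub_jumpFun (hws : Summable w) {a b : ℝ} (hab : a ≤ b) :
    jumpFun w b - jumpFun w a = b - a + ∑' d, (Ioc a b).indicator w d := by
  have : (Iic b).indicator w = (Iic a).indicator w + (Ioc a b).indicator w := by
    rw [← Iic_union_Ioc_eq_Iic hab, indicator_union_of_disjoint (Iic_disjoint_Ioc le_rfl)]
    rfl
  rw [jumpFun, jumpFun, this]
  simp only [Pi.add_apply]
  rw [Summable.tsum_add (hws.indicator _) (hws.indicator _)]
  ring

theorem jumpFun_sub_jump_sub_jumpFun (hws : Summable w) {a b : ℝ} (hab : a < b) :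
    jumpFun w b - w b - jumpFun w a = b - a + ∑' d, (Ioo a b).indicator w d := by
  have : (Ioc a b).indicator w = (Ioo a b).indicator w + ({b} : Set ℝ).indicator w := by
    rw [← Ioo_union_right hab, indicator_union_of_disjoint (by simp)]
    rfl
  have h := jumpFun_sub_jumpFun hws hab.le
  rw [this] at h
  simp only [Pi.add_apply] at h
  rw [Summable.tsum_add (hws.indicator _) (hws.indicator _),
    tsum_eq_single (f := ({b} : Set ℝ).indicator w) b
      (fun d hd => indicator_of_notMem (mem_singleton_iff.not.2 hd) w),
    indicator_of_mem (mem_singleton b)] at h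
  linarith

theorem jumpFun_lt_jumpFun_sub_jump (hw : 0 ≤ w) (hws : Summable w) {a b : ℝ} (hab : a < b) :
    jumpFun w a < jumpFun w b - w b := by
  have := jumpFun_sub_jump_sub_jumpFun hws hab
  have : 0 ≤ ∑' d, (Ioo a b).indicator w d := tsum_nonneg (indicator_nonneg fun d _ => hw d)
  linarith

theorem jumpFun_strictMono (hw : 0 ≤ w) (hws : Summable w) : StrictMono (jumpFun w) :=
  fun _ b hab => (jumpFun_lt_jumpFun_sub_jump hw hws hab).trans_le (sub_le_self _ (hw b))

theorem le_jumpFun (hw : 0 ≤ w) (t : ℝ) : t ≤ jumpFun w t :=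
  le_add_of_nonneg_right (tsum_nonneg (indicator_nonneg fun d _ => hw d))

theorem jumpFun_eq_self {t : ℝ} (h : ∀ d ≤ t, w d = 0) : jumpFun w t = t := by
  have : ∀ d, (Iic t).indicator w d = 0 := fun d => indicator_apply_eq_zero.2 (h d)
  simp [jumpFun, this]

theorem tendsto_jumpFun_nhdsGT (hw : 0 ≤ w) (hws : Summable w) (t : ℝ) :
    Tendsto (jumpFun w) (𝓝[>] t) (𝓝 (jumpFun w t)) := by
  have hsum : Tendsto (fun u => ∑' d, (Ioc t u).indicator w d) (𝓝[>] t) (𝓝 0) := by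
    refine tendsto_tsum_indicator_zero hw hws fun d => ?_
    rcases le_or_gt d t with hd | hd
    · exact Eventually.of_forall fun u hu => hd.not_gt hu.1
    · exact (eventually_nhdsWithin_of_eventually_nhds (eventually_lt_nhds hd)).mono
        fun u hu hdu => hu.not_ge hdu.2
  have hlin : Tendsto (fun u => u - t) (𝓝[>] t) (𝓝 0) :=
    tendsto_nhdsWithin_of_tendsto_nhds (by simpa using (continuous_sub_right t).tendsto t)
  have := (hlin.add hsum).const_add (jumpFun w t)
  rw [add_zero, add_zero] at this
  refine this.congr' (eventually_nhdsWithin_of_forall fun u hu => ?_)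
  have := jumpFun_sub_jumpFun hws (le_of_lt hu)
  linarith

theorem tendsto_jumpFun_nhdsLT (hw : 0 ≤ w) (hws : Summable w) (t : ℝ) :
    Tendsto (jumpFun w) (𝓝[<] t) (𝓝 (jumpFun w t - w t)) := by
  have hsum : Tendsto (fun u => ∑' d, (Ioo u t).indicator w d) (𝓝[<] t) (𝓝 0) := by
    refine tendsto_tsum_indicator_zero hw hws fun d => ?_
    rcases le_or_gt t d with hd | hd
    · exact Eventually.of_forall fun u hu => hd.not_gt hu.2
    · exact (eventually_nhdsWithin_of_eventually_nhds (eventually_gt_nhds hd)).mono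
        fun u hu hdu => hu.not_gt hdu.1
  have hlin : Tendsto (fun u => t - u) (𝓝[<] t) (𝓝 0) :=
    tendsto_nhdsWithin_of_tendsto_nhds (by simpa using (continuous_sub_left t).tendsto t)
  have := (hlin.add hsum).const_sub (jumpFun w t - w t)
  rw [add_zero, sub_zero] at this
  refine this.congr' (eventually_nhdsWithin_of_forall fun u hu => ?_)
  have := jumpFun_sub_jump_sub_jumpFun hws hu
  linarith

end JumpFunction

section IntervalUnions

theorem measureReal_biUnion_mem_of_inter_mem {α ι : Type*} [MeasurableSpace α] {μ : Measure α}
    {G : AddSubgroup ℝ} {𝒞 : Set (Set α)} (h_inter : ∀ s ∈ 𝒞, ∀ t ∈ 𝒞, s ∩ t ∈ 𝒞)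
    (h_meas : ∀ s ∈ 𝒞, MeasurableSet s) (h_fin : ∀ s ∈ 𝒞, μ s ≠ ∞)
    (h_mem : ∀ s ∈ 𝒞, μ.real s ∈ G) {I : Set ι} (hI : I.Finite) (f : ι → Set α)
    (hf : ∀ i ∈ I, f i ∈ 𝒞) : μ.real (⋃ i ∈ I, f i) ∈ G := by
  induction I, hI using Set.Finite.induction_on generalizing f with
  | empty => simp
  | @insert j I _ hI ih =>
    have hj : f j ∈ 𝒞 := hf j (mem_insert j I)
    have hfI : ∀ i ∈ I, f i ∈ 𝒞 := fun i hi => hf i (mem_insert_of_mem j hi)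
    have hU : μ (⋃ i ∈ I, f i) ≠ ∞ :=
      (measure_biUnion_lt_top hI fun i hi => (h_fin _ (hfI i hi)).lt_top).ne
    have key := measureReal_union_add_inter' (s := f j) (t := ⋃ i ∈ I, f i) (h_meas _ hj)
      (h_fin _ hj) hU
    rw [inter_iUnion₂] at key
    have hinter := ih (fun i => f j ∩ f i) fun i hi => h_inter _ hj _ (hfI i hi)
    rw [biUnion_insert, eq_sub_of_add_eq key]
    exact sub_mem (add_mem (h_mem _ hj) (ih f hfI)) hinter

theorem volume_real_biUnion_Ico_mem {ι : Type*} {G : AddSubgroup ℝ} {I : Set ι} (hI : I.Finite)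
    {a b : ι → ℝ} (ha : ∀ i ∈ I, a i ∈ G) (hb : ∀ i ∈ I, b i ∈ G) :
    volume.real (⋃ i ∈ I, Ico (a i) (b i)) ∈ G := by
  refine measureReal_biUnion_mem_of_inter_mem (𝒞 := {s | ∃ x ∈ G, ∃ y ∈ G, s = Ico x y})
    ?_ ?_ ?_ ?_ hI _ fun i hi => ⟨a i, ha i hi, b i, hb i hi, rfl⟩
  · rintro _ ⟨x, hx, y, hy, rfl⟩ _ ⟨x', hx', y', hy', rfl⟩
    exact ⟨_, max_rec' (· ∈ G) hx hx', _, min_rec' (· ∈ G) hy hy', Ico_inter_Ico⟩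
  · rintro _ ⟨x, -, y, -, rfl⟩
    exact measurableSet_Ico
  · rintro _ ⟨x, -, y, -, rfl⟩
    simp
  · rintro _ ⟨x, hx, y, hy, rfl⟩
    rw [Real.volume_real_Ico]
    exact max_rec' (· ∈ G) (sub_mem hy hx) (zero_mem G)

theorem exists_volume_real_inter_Iio_eq {A : Set ℝ} (hA : Bornology.IsBounded A) {σ : ℝ}
    (hσ : 0 < σ) (hσA : σ ≤ volume.real A) :
    ∃ t, volume.real (A ∩ Iio t) = σ ∧ ∀ u < t, volume.real (A ∩ Iio u) < σ := by
  set ψ : ℝ → ℝ := fun t => volume.real (A ∩ Iio t) with hψ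
  have hfin : volume A ≠ ∞ := hA.measure_lt_top.ne
  have hstep : ∀ t u, t ≤ u → ψ t ≤ ψ u ∧ ψ u ≤ ψ t + (u - t) := fun t u htu => by
    refine ⟨measureReal_mono (inter_subset_inter_right _ (Iio_subset_Iio htu))
      (measure_ne_top_of_subset inter_subset_left hfin), ?_⟩
    calc ψ u ≤ volume.real ((A ∩ Iio t) ∪ Ico t u) :=
          measureReal_mono (fun y ⟨hyA, hyu⟩ => (lt_or_ge y t).imp (fun h => ⟨hyA, h⟩)
            fun h => ⟨h, hyu⟩)
            (measure_union_ne_top (measure_ne_top_of_subset inter_subset_left hfin) (by simp))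
      _ ≤ ψ t + (u - t) := by
          rw [← Real.volume_real_Ico_of_le htu]
          exact measureReal_union_le _ _
  obtain ⟨m, hm⟩ := hA.bddBelow
  obtain ⟨M, hM⟩ := hA.bddAbove
  set T := {t | σ ≤ ψ t}
  have hMT : M + 1 ∈ T := by
    show σ ≤ volume.real (A ∩ Iio (M + 1))
    have hAM : A ⊆ Iio (M + 1) := fun y hy => (hM hy).trans_lt (lt_add_one M)
    rwa [inter_eq_left.2 hAM]
  have hmT : m ∈ lowerBounds T := fun t ht => by
    by_contra! htm
    have : A ∩ Iio t = ∅ :=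
      eq_empty_of_forall_notMem fun y hy => (hm hy.1).not_gt (hy.2.trans htm)
    have : σ ≤ 0 := by simpa [T, hψ, this] using ht
    linarith
  have hbelow : ∀ u < sInf T, ψ u < σ := fun u hu =>
    not_le.1 fun h => notMem_of_lt_csInf hu ⟨m, hmT⟩ h
  refine ⟨sInf T, le_antisymm ?_ ?_, hbelow⟩
  · refine le_of_forall_pos_lt_add fun ε hε => ?_
    have := hbelow (sInf T - ε) (by linarith)
    have := (hstep (sInf T - ε) (sInf T) (by linarith)).2
    linarith
  · refine le_of_forall_pos_lt_add fun ε hε => ?_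
    obtain ⟨u, huT, hu⟩ := exists_lt_of_csInf_lt ⟨_, hMT⟩ (lt_add_of_pos_right (sInf T) hε)
    have := (hstep (sInf T) u (csInf_le ⟨m, hmT⟩ huT)).2
    have : σ ≤ ψ u := huT
    linarith

theorem exists_lt_le_of_forall_inter_Ico_nonempty {ι : Type*} {I : Set ι} (hI : I.Finite)
    {a b : ι → ℝ} {t : ℝ}
    (h : ∀ u < t, ((⋃ i ∈ I, Ico (a i) (b i)) ∩ Ico u t).Nonempty) :
    ∃ i ∈ I, a i < t ∧ t ≤ b i := by
  by_contra! hI'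
  have hev : ∀ᶠ u in 𝓝[<] t, u < t ∧ ∀ i ∈ I, b i < t → b i ≤ u := by
    refine (eventually_mem_nhdsWithin (a := t) (s := Iio t)).and
      ((eventually_all_finite hI).2 fun i _ => ?_)
    by_cases hbi : b i < t
    · exact (eventually_nhdsWithin_of_eventually_nhds (eventually_gt_nhds hbi)).mono
        fun u hu _ => hu.le
    · exact Eventually.of_forall fun u h => absurd h hbi
  obtain ⟨u, hut, hu⟩ := hev.exists
  obtain ⟨y, hyA, hyu, hyt⟩ := h u hut
  obtain ⟨i, hi, hyi⟩ := mem_iUnion₂.1 hyA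
  have hbi := hI' i hi (hyi.1.trans_lt hyt)
  exact (hu i hi hbi).not_gt (hyu.trans_lt hyi.2) |>.elim

theorem exists_mem_addSubgroup_volume_real_biUnion_Ico_inter_Iio_eq {ι : Type*}
    {G : AddSubgroup ℝ} {I : Set ι} (hI : I.Finite) {a b : ι → ℝ}
    (ha : ∀ i ∈ I, a i ∈ G) (hb : ∀ i ∈ I, b i ∈ G) {σ : ℝ} (hσG : σ ∈ G) (hσ : 0 < σ)
    (hσA : σ ≤ volume.real (⋃ i ∈ I, Ico (a i) (b i))) :
    ∃ t ∈ G, ∃ i ∈ I, a i < t ∧ t ≤ b i ∧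
      volume.real ((⋃ i ∈ I, Ico (a i) (b i)) ∩ Iio t) = σ := by
  set A := ⋃ i ∈ I, Ico (a i) (b i)
  have hA : Bornology.IsBounded A :=
    (Bornology.isBounded_biUnion hI).2 fun _ _ => Metric.isBounded_Ico _ _
  have hfin : ∀ s ⊆ A, volume s ≠ ∞ := fun s hs => (hA.subset hs).measure_lt_top.ne
  obtain ⟨t, ht, hmin⟩ := exists_volume_real_inter_Iio_eq hA hσ hσA
  have hacc : ∀ u < t, (A ∩ Ico u t).Nonempty := fun u hu => by
    by_contra! h
    have hsub : A ∩ Iio t ⊆ A ∩ Iio u := fun y ⟨hyA, hyt⟩ =>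
      ⟨hyA, not_le.1 fun hyu => h.subset ⟨hyA, hyu, hyt⟩⟩
    have := measureReal_mono hsub (hfin _ inter_subset_left)
    linarith [hmin u hu]
  obtain ⟨i, hi, hait, htbi⟩ := exists_lt_le_of_forall_inter_Ico_nonempty hI hacc
  have hsplit : A ∩ Iio t = (A ∩ Iio (a i)) ∪ Ico (a i) t := by
    ext y
    constructor
    · rintro ⟨hyA, hyt⟩
      exact (lt_or_ge y (a i)).imp (fun h => ⟨hyA, h⟩) fun h => ⟨h, hyt⟩
    · rintro (⟨hyA, hya⟩ | ⟨hya, hyt⟩)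
      · exact ⟨hyA, hya.trans hait⟩
      · exact ⟨mem_iUnion₂.2 ⟨i, hi, hya, hyt.trans_le htbi⟩, hyt⟩
  have hlow : A ∩ Iio (a i) = ⋃ j ∈ I, Ico (a j) (min (b j) (a i)) := by
    rw [iUnion₂_inter]
    exact iUnion₂_congr fun j _ => Ico_inter_Iio
  have hlowG : volume.real (A ∩ Iio (a i)) ∈ G := by
    rw [hlow]
    exact volume_real_biUnion_Ico_mem hI ha fun j hj => min_rec' (· ∈ G) (hb j hj) (ha i hi)
  have heq : volume.real (A ∩ Iio t) = volume.real (A ∩ Iio (a i)) + (t - a i) := by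
    rw [hsplit, measureReal_union (disjoint_left.2 fun y hy hy' => hy.2.not_ge hy'.1)
      measurableSet_Ico (hfin _ inter_subset_left) (by simp),
      Real.volume_real_Ico_of_le hait.le]
  refine ⟨t, ?_, i, hi, hait, htbi, ht⟩
  have : t = σ - volume.real (A ∩ Iio (a i)) + a i := by linarith
  rw [this]
  exact add_mem (sub_mem hσG hlowG) (ha i hi)

end IntervalUnions

theorem Set.Countable.exists_summable_pos_iff_mem {α : Type*} {S : Set α} (hS : S.Countable) :
    ∃ w : α → ℝ, 0 ≤ w ∧ Summable w ∧ ∀ t, 0 < w t ↔ t ∈ S := by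
  have := hS.to_subtype
  obtain ⟨ε, hε, _, hsum, -⟩ := NNReal.exists_pos_sum_of_countable one_ne_zero S
  set w := Function.extend Subtype.val (fun s : S => (ε s : ℝ)) 0
  have hw : ∀ t, (∃ s : S, ↑s = t ∧ w t = ε s) ∨ (t ∉ S ∧ w t = 0) := fun t => by
    by_cases ht : t ∈ S
    · exact Or.inl ⟨⟨t, ht⟩, rfl, Subtype.val_injective.extend_apply _ _ (⟨t, ht⟩ : S)⟩
    · exact Or.inr ⟨ht, Function.extend_apply' _ _ _ fun ⟨s, hs⟩ => ht (hs ▸ s.2)⟩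
  refine ⟨w, fun t => ?_, (summable_extend_zero Subtype.val_injective).2
    (NNReal.summable_coe.2 hsum.summable), fun t => ?_⟩
  · rcases hw t with ⟨s, -, h⟩ | ⟨-, h⟩ <;> rw [h]
    exacts [(ε s).2, le_rfl]
  · rcases hw t with ⟨s, rfl, h⟩ | ⟨ht, h⟩ <;> rw [h]
    · exact iff_of_true (NNReal.coe_pos.2 (hε s)) s.2
    · exact iff_of_false (lt_irrefl 0) ht

structure Doubling where
  G : AddSubgroup ℝ
  D : Set ℝ
  D_eq : D = {x : ℝ | x ∈ G ∧ x ∈ Ico (0 : ℝ) 1}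
  countable : D.Countable
  dense : Ico (0 : ℝ) 1 ⊆ closure D
  w : ℝ → ℝ
  w_nonneg : 0 ≤ w
  summable_w : Summable w
  w_pos_iff : ∀ t, 0 < w t ↔ t ∈ D \ {0}

namespace Doubling

variable (c : Doubling)

theorem mem_D_iff {x : ℝ} : x ∈ c.D ↔ x ∈ c.G ∧ x ∈ Ico (0 : ℝ) 1 := by
  rw [c.D_eq]; rfl

theorem D_subset : c.D ⊆ Ico 0 1 := fun _ hx => (c.mem_D_iff.1 hx).2

theorem zero_mem_D : (0 : ℝ) ∈ c.D := c.mem_D_iff.2 ⟨zero_mem _, le_rfl, one_pos⟩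

theorem w_eq_zero {t : ℝ} (ht : t ∉ c.D \ {0}) : c.w t = 0 :=
  le_antisymm (not_lt.1 fun h => ht ((c.w_pos_iff t).1 h)) (c.w_nonneg t)

theorem w_pos {t : ℝ} (ht : t ∈ c.D) (h0 : 0 < t) : 0 < c.w t :=
  (c.w_pos_iff t).2 ⟨ht, h0.ne'⟩

theorem jumpFun_zero : jumpFun c.w 0 = 0 :=
  jumpFun_eq_self fun _ hd => c.w_eq_zero fun h => h.2 (le_antisymm hd (c.D_subset h.1).1)

theorem w_one : c.w 1 = 0 := c.w_eq_zero fun h => (c.D_subset h.1).2.false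

theorem jumpFun_strictMono : StrictMono (jumpFun c.w) :=
  _root_.jumpFun_strictMono c.w_nonneg c.summable_w

theorem jumpFun_lt_jumpFun_sub_jump {a b : ℝ} (hab : a < b) :
    jumpFun c.w a < jumpFun c.w b - c.w b :=
  _root_.jumpFun_lt_jumpFun_sub_jump c.w_nonneg c.summable_w hab

theorem exists_mem_D_Ioo {l r : ℝ} (hl : 0 ≤ l) (hlr : l < r) (hr : r ≤ 1) :
    (c.D ∩ Ioo l r).Nonempty := by
  have hm : (l + r) / 2 ∈ closure c.D := c.dense ⟨by linarith, by linarith⟩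
  rw [inter_comm]
  exact mem_closure_iff_nhds.1 hm _ (Ioo_mem_nhds (by linarith) (by linarith))

theorem frequently_mem_D_nhdsGT {s : ℝ} (hs : s ∈ Ico (0 : ℝ) 1) :
    ∃ᶠ u in 𝓝[>] s, u ∈ c.D := by
  refine frequently_iff.2 fun {U} hU => ?_
  obtain ⟨r, hsr, hrU⟩ := mem_nhdsGT_iff_exists_Ioo_subset.1 hU
  obtain ⟨d, hdD, hd⟩ := c.exists_mem_D_Ioo hs.1 (lt_min hsr hs.2) (min_le_right r 1)
  exact ⟨d, hrU ⟨hd.1, hd.2.trans_le (min_le_left r 1)⟩, hdD⟩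

theorem frequently_mem_D_nhdsLT {s : ℝ} (hs : s ∈ Ioc (0 : ℝ) 1) :
    ∃ᶠ u in 𝓝[<] s, u ∈ c.D := by
  refine frequently_iff.2 fun {U} hU => ?_
  obtain ⟨l, hls, hlU⟩ := mem_nhdsLT_iff_exists_Ioo_subset.1 hU
  obtain ⟨d, hdD, hd⟩ := c.exists_mem_D_Ioo (le_max_right l 0) (max_lt hls hs.1) hs.2
  exact ⟨d, hlU ⟨(le_max_left l 0).trans_lt hd.1, hd.2⟩, hdD⟩

def space : Set ℝ :=
  Ico 0 (jumpFun c.w 1) \ ⋃ d, Ioo (jumpFun c.w d - c.w d) (jumpFun c.w d)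

theorem notMem_Ioo_of_mem_space {x : ℝ} (hx : x ∈ c.space) (d : ℝ) :
    x ∉ Ioo (jumpFun c.w d - c.w d) (jumpFun c.w d) :=
  fun h => hx.2 (mem_iUnion.2 ⟨d, h⟩)

theorem jumpFun_mem_space {t : ℝ} (ht : t ∈ Ico (0 : ℝ) 1) : jumpFun c.w t ∈ c.space := by
  refine ⟨⟨c.jumpFun_zero ▸ c.jumpFun_strictMono.monotone ht.1, c.jumpFun_strictMono ht.2⟩,
    ?_⟩
  simp only [mem_iUnion, not_exists]
  intro d hd
  rcases le_or_gt d t with hdt | htd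
  · exact hd.2.not_ge (c.jumpFun_strictMono.monotone hdt)
  · exact hd.1.not_gt (c.jumpFun_lt_jumpFun_sub_jump htd)

theorem exists_eq_of_mem_space {x : ℝ} (hx : x ∈ c.space) :
    ∃ s ∈ Ico (0 : ℝ) 1, x = jumpFun c.w s ∨ x = jumpFun c.w s - c.w s := by
  set F := jumpFun c.w
  obtain ⟨hx0, hx1⟩ := hx.1
  -- `x` lies between the left and the right limit of `F` at `s = sup {t | F t ≤ x}`.
  set A := {t | F t ≤ x}
  have h0A : (0 : ℝ) ∈ A := by simp [A, F, c.jumpFun_zero, hx0]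
  have hA : BddAbove A := ⟨x, fun t ht => (le_jumpFun c.w_nonneg t).trans ht⟩
  set s := sSup A
  have hA1 : ∀ t ∈ A, t < 1 := fun t ht => c.jumpFun_strictMono.lt_iff_lt.1 (ht.trans_lt hx1)
  have hgt : ∀ t, s < t → x < F t := fun t hst => not_le.1 fun h => hst.not_ge (le_csSup hA h)
  have hle : ∀ t < s, F t ≤ x := fun t hts => by
    obtain ⟨t', ht'A, htt'⟩ := exists_lt_of_lt_csSup ⟨0, h0A⟩ hts
    exact (c.jumpFun_strictMono.monotone htt'.le).trans ht'A
  have hright : x ≤ F s := ge_of_tendsto (tendsto_jumpFun_nhdsGT c.w_nonneg c.summable_w s)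
    (eventually_nhdsWithin_of_forall fun t ht => (hgt t ht).le)
  have hleft : F s - c.w s ≤ x := le_of_tendsto (tendsto_jumpFun_nhdsLT c.w_nonneg c.summable_w s)
    (eventually_nhdsWithin_of_forall fun t ht => hle t ht)
  have hs1 : s < 1 := by
    refine lt_of_le_of_ne (csSup_le ⟨0, h0A⟩ fun t ht => (hA1 t ht).le) fun h => ?_
    rw [h, c.w_one, sub_zero] at hleft
    exact hleft.not_gt hx1
  refine ⟨s, ⟨le_csSup hA h0A, hs1⟩, ?_⟩
  by_contra! hne
  exact c.notMem_Ioo_of_mem_space hx s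
    ⟨lt_of_le_of_ne hleft hne.2.symm, lt_of_le_of_ne hright hne.1⟩

theorem isOpen_setOf_jumpFun_le {a : ℝ} (ha : a ∈ c.D) :
    IsOpen {x : c.space | jumpFun c.w a ≤ x} := by
  rcases (c.D_subset ha).1.eq_or_lt with h | h
  · convert isOpen_univ
    ext x
    simp [← h, c.jumpFun_zero, x.2.1.1]
  · have : {x : c.space | jumpFun c.w a ≤ x} =
        Subtype.val ⁻¹' Ioi (jumpFun c.w a - c.w a) := by
      ext x
      refine ⟨fun hx => ?_,
        fun hx => not_lt.1 fun hx' => c.notMem_Ioo_of_mem_space x.2 a ⟨hx, hx'⟩⟩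
      have := c.w_pos ha h
      exact (sub_lt_self _ this).trans_le hx
    rw [this]
    exact isOpen_Ioi.preimage continuous_subtype_val

theorem isOpen_setOf_le_jumpFun_sub {b : ℝ} (hb : 0 < c.w b) :
    IsOpen {x : c.space | (x : ℝ) ≤ jumpFun c.w b - c.w b} := by
  have : {x : c.space | (x : ℝ) ≤ jumpFun c.w b - c.w b} =
      Subtype.val ⁻¹' Iio (jumpFun c.w b) := by
    ext x
    refine ⟨fun hx => hx.trans_lt (sub_lt_self _ hb), fun hx => ?_⟩
    exact not_lt.1 fun hx' => c.notMem_Ioo_of_mem_space x.2 b ⟨hx', hx⟩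
  rw [this]
  exact isOpen_Iio.preimage continuous_subtype_val

theorem isCompact_setOf_le {v : ℝ} (hv : v < jumpFun c.w 1) :
    IsCompact {x : c.space | (x : ℝ) ≤ v} := by
  have : Subtype.val '' {x : c.space | (x : ℝ) ≤ v} =
      Icc 0 v \ ⋃ d, Ioo (jumpFun c.w d - c.w d) (jumpFun c.w d) := by
    ext y
    constructor
    · rintro ⟨x, hxv, rfl⟩
      exact ⟨⟨x.2.1.1, hxv⟩, x.2.2⟩
    · rintro ⟨⟨hy0, hyv⟩, hy⟩
      exact ⟨⟨y, ⟨hy0, hyv.trans_lt hv⟩, hy⟩, hyv, rfl⟩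
  rw [Topology.IsEmbedding.subtypeVal.isCompact_iff, this]
  exact isCompact_Icc.diff (isOpen_iUnion fun _ => isOpen_Ioo)

def basic (a b : ℝ) : Set c.space :=
  Subtype.val ⁻¹' Icc (jumpFun c.w a) (jumpFun c.w b - c.w b)

def intervals : Set (ℝ × ℝ) := {p | p.1 ∈ c.D ∧ p.2 ∈ c.D ∧ p.1 < p.2}

theorem w_snd_pos {p : ℝ × ℝ} (hp : p ∈ c.intervals) : 0 < c.w p.2 :=
  c.w_pos hp.2.1 ((c.D_subset hp.1).1.trans_lt hp.2.2)

theorem isOpen_basic {p : ℝ × ℝ} (hp : p ∈ c.intervals) : IsOpen (c.basic p.1 p.2) :=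
  (c.isOpen_setOf_jumpFun_le hp.1).inter (c.isOpen_setOf_le_jumpFun_sub (c.w_snd_pos hp))

theorem isCompact_basic {p : ℝ × ℝ} (hp : p ∈ c.intervals) :
    IsCompact (c.basic p.1 p.2) := by
  have hv : jumpFun c.w p.2 - c.w p.2 < jumpFun c.w 1 :=
    (sub_le_self _ (c.w_nonneg _)).trans_lt (c.jumpFun_strictMono (c.D_subset hp.2.1).2)
  exact (c.isCompact_setOf_le hv).of_isClosed_subset
    (isClosed_Icc.preimage continuous_subtype_val) fun x hx => hx.2

theorem exists_mem_D_jumpFun_le {x : ℝ} (hx : x ∈ c.space) {ε : ℝ} (hε : 0 < ε) :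
    ∃ a ∈ c.D, jumpFun c.w a ≤ x ∧ x - ε < jumpFun c.w a := by
  obtain ⟨s, hs, hxs⟩ := c.exists_eq_of_mem_space hx
  by_cases hsD : s ∈ c.D ∧ x = jumpFun c.w s
  · exact ⟨s, hsD.1, hsD.2.ge, by linarith⟩
  have hxs' : x = jumpFun c.w s - c.w s := by
    rcases hxs with h | h
    · rw [h, c.w_eq_zero fun h' => hsD ⟨h'.1, h⟩, sub_zero]
    · exact h
  have hs0 : 0 < s := lt_of_le_of_ne hs.1 fun h => hsD
    ⟨h ▸ c.zero_mem_D, by rw [hxs', ← h, c.w_eq_zero fun h' => h'.2 rfl, sub_zero]⟩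
  have hev : ∀ᶠ u in 𝓝[<] s, u < s ∧ x - ε < jumpFun c.w u :=
    eventually_mem_nhdsWithin.and ((tendsto_jumpFun_nhdsLT c.w_nonneg c.summable_w s).eventually
      (eventually_gt_nhds (by linarith)))
  obtain ⟨a, ⟨has, hxa⟩, haD⟩ :=
    (hev.and_frequently (c.frequently_mem_D_nhdsLT ⟨hs0, hs.2.le⟩)).exists
  exact ⟨a, haD, hxs' ▸ (c.jumpFun_lt_jumpFun_sub_jump has).le, hxa⟩

theorem exists_mem_D_le_jumpFun_sub {x : ℝ} (hx : x ∈ c.space) {ε : ℝ} (hε : 0 < ε) :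
    ∃ b ∈ c.D, 0 < c.w b ∧
      x ≤ jumpFun c.w b - c.w b ∧ jumpFun c.w b - c.w b < x + ε := by
  obtain ⟨s, hs, hxs⟩ := c.exists_eq_of_mem_space hx
  by_cases hws : x = jumpFun c.w s - c.w s ∧ 0 < c.w s
  · exact ⟨s, ((c.w_pos_iff s).1 hws.2).1, hws.2, hws.1.le, by linarith [hws.1]⟩
  have hxs' : x = jumpFun c.w s := by
    rcases hxs with h | h
    · exact h
    · rw [h, le_antisymm (not_lt.1 fun h' => hws ⟨h, h'⟩) (c.w_nonneg s), sub_zero]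
  have hev : ∀ᶠ u in 𝓝[>] s, s < u ∧ jumpFun c.w u < x + ε :=
    eventually_mem_nhdsWithin.and ((tendsto_jumpFun_nhdsGT c.w_nonneg c.summable_w s).eventually
      (eventually_lt_nhds (by linarith)))
  obtain ⟨b, ⟨hsb, hbx⟩, hbD⟩ := (hev.and_frequently (c.frequently_mem_D_nhdsGT hs)).exists
  exact ⟨b, hbD, c.w_pos hbD (hs.1.trans_lt hsb), hxs' ▸ (c.jumpFun_lt_jumpFun_sub_jump hsb).le,
    (sub_le_self _ (c.w_nonneg b)).trans_lt hbx⟩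

theorem exists_basic_subset_ball (x : c.space) {ε : ℝ} (hε : 0 < ε) :
    ∃ p ∈ c.intervals, x ∈ c.basic p.1 p.2 ∧
      c.basic p.1 p.2 ⊆ Subtype.val ⁻¹' Metric.ball (x : ℝ) ε := by
  obtain ⟨a, haD, hax, hxa⟩ := c.exists_mem_D_jumpFun_le x.2 hε
  obtain ⟨b, hbD, hwb, hxb, hbx⟩ := c.exists_mem_D_le_jumpFun_sub x.2 hε
  have hab : a < b := c.jumpFun_strictMono.lt_iff_lt.1 <| by linarith
  refine ⟨(a, b), ⟨haD, hbD, hab⟩, ⟨hax, hxb⟩, fun y ⟨hay, hyb⟩ => ?_⟩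
  rw [mem_preimage, Real.ball_eq_Ioo]
  exact ⟨by linarith, by linarith⟩

theorem isTopologicalBasis_basic :
    IsTopologicalBasis ((fun p : ℝ × ℝ => c.basic p.1 p.2) '' c.intervals) := by
  refine isTopologicalBasis_of_isOpen_of_nhds
    (by rintro _ ⟨p, hp, rfl⟩; exact c.isOpen_basic hp) fun x U hxU hU => ?_
  obtain ⟨O, hO, rfl⟩ := isOpen_induced_iff.1 hU
  obtain ⟨ε, hε, hball⟩ := Metric.isOpen_iff.1 hO x hxU
  obtain ⟨p, hp, hxp, hpball⟩ := c.exists_basic_subset_ball x hε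
  exact ⟨_, ⟨p, hp, rfl⟩, hxp, hpball.trans (preimage_mono hball)⟩

theorem locallyCompactSpace : LocallyCompactSpace c.space := by
  refine .of_hasBasis (fun x => c.isTopologicalBasis_basic.nhds_hasBasis (a := x)) ?_
  rintro x _ ⟨⟨p, hp, rfl⟩, -⟩
  exact c.isCompact_basic hp

theorem noncompactSpace : NoncompactSpace c.space := by
  refine ⟨fun h => ?_⟩
  have hclosed : IsClosed c.space := (isCompact_iff_isCompact_univ.2 h).isClosed
  have h1 := hclosed.mem_of_tendsto (tendsto_jumpFun_nhdsLT c.w_nonneg c.summable_w 1)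
    (mem_of_superset (Ioo_mem_nhdsLT zero_lt_one) fun t ht =>
      c.jumpFun_mem_space ⟨ht.1.le, ht.2⟩)
  rw [c.w_one, sub_zero] at h1
  exact h1.1.2.false

def shadow (K : Set c.space) : Set ℝ := jumpFun c.w ⁻¹' (Subtype.val '' K) ∩ Ico 0 1

noncomputable def measure : Measure c.space :=
  ((volume.restrict (Ico (0 : ℝ) 1)).map (jumpFun c.w)).comap Subtype.val

theorem measurableSet_space : MeasurableSet c.space :=
  measurableSet_Ico.diff (isOpen_iUnion fun _ => isOpen_Ioo).measurableSet

theorem measure_apply {K : Set c.space} (hK : MeasurableSet K) :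
    c.measure K = volume (c.shadow K) := by
  have hemb := MeasurableEmbedding.subtype_coe c.measurableSet_space
  have hF : Measurable (jumpFun c.w) := c.jumpFun_strictMono.monotone.measurable
  rw [measure, hemb.comap_apply, Measure.map_apply hF (hemb.measurableSet_image.2 hK),
    Measure.restrict_apply (hF (hemb.measurableSet_image.2 hK))]
  rfl

theorem shadow_univ : c.shadow univ = Ico 0 1 :=
  inter_eq_right.2 fun _ ht => ⟨⟨_, c.jumpFun_mem_space ht⟩, mem_univ _, rfl⟩

theorem shadow_inter (K L : Set c.space) : c.shadow (K ∩ L) = c.shadow K ∩ c.shadow L := by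
  rw [shadow, shadow, shadow, image_inter Subtype.val_injective, preimage_inter,
    inter_inter_distrib_right]

theorem shadow_biUnion {ι : Type*} (I : Set ι) (K : ι → Set c.space) :
    c.shadow (⋃ i ∈ I, K i) = ⋃ i ∈ I, c.shadow (K i) := by
  simp only [shadow, image_iUnion₂, preimage_iUnion₂, iUnion₂_inter]

theorem shadow_basic {p : ℝ × ℝ} (hp : p ∈ c.intervals) :
    c.shadow (c.basic p.1 p.2) = Ico p.1 p.2 := by
  have h0 := (c.D_subset hp.1).1
  have h1 := (c.D_subset hp.2.1).2
  ext t
  simp only [shadow, basic, Subtype.image_preimage_coe, mem_inter_iff, mem_preimage, mem_Icc,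
    mem_Ico, c.jumpFun_strictMono.le_iff_le]
  constructor
  · rintro ⟨⟨-, hat, htb⟩, -⟩
    refine ⟨hat, not_le.1 fun hbt => ?_⟩
    have := c.jumpFun_strictMono.monotone hbt
    linarith [c.w_snd_pos hp]
  · rintro ⟨hat, htb⟩
    have ht : t ∈ Ico (0 : ℝ) 1 := ⟨h0.trans hat, htb.trans h1⟩
    exact ⟨⟨c.jumpFun_mem_space ht, hat, (c.jumpFun_lt_jumpFun_sub_jump htb).le⟩, ht⟩

theorem isProbabilityMeasure : IsProbabilityMeasure c.measure :=
  ⟨by rw [c.measure_apply MeasurableSet.univ, shadow_univ, Real.volume_Ico, sub_zero,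
    ENNReal.ofReal_one]⟩

theorem measure_basic {p : ℝ × ℝ} (hp : p ∈ c.intervals) :
    c.measure (c.basic p.1 p.2) = ENNReal.ofReal (p.2 - p.1) := by
  rw [c.measure_apply (c.isOpen_basic hp).measurableSet, c.shadow_basic hp, Real.volume_Ico]

theorem measure_basic_pos {p : ℝ × ℝ} (hp : p ∈ c.intervals) :
    0 < c.measure (c.basic p.1 p.2) := by
  rw [c.measure_basic hp, ENNReal.ofReal_pos, sub_pos]
  exact hp.2.2

theorem nonAtomic : NonAtomic c.measure := fun x => by
  rw [c.measure_apply (measurableSet_singleton x)]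
  refine Set.Subsingleton.measure_zero (fun s hs t ht => ?_) _
  obtain ⟨⟨y, hy, hys⟩, -⟩ := hs
  obtain ⟨⟨z, hz, hzt⟩, -⟩ := ht
  rw [mem_singleton_iff] at hy hz
  exact c.jumpFun_strictMono.injective (hys.symm.trans (hy ▸ hz ▸ hzt))

theorem isFull : IsFull c.measure := by
  rintro U hU ⟨x, hx⟩
  obtain ⟨_, ⟨p, hp, rfl⟩, -, hpU⟩ :=
    c.isTopologicalBasis_basic.exists_subset_of_mem_open hx hU
  exact (c.measure_basic_pos hp).trans_le (measure_mono hpU)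

theorem noIsolatedPoints : NoIsolatedPoints c.space := fun x hx => by
  obtain ⟨_, ⟨p, hp, rfl⟩, -, hpx⟩ :=
    c.isTopologicalBasis_basic.exists_subset_of_mem_open (mem_singleton x) hx
  have := (c.measure_basic_pos hp).trans_le (measure_mono hpx)
  rw [c.nonAtomic x] at this
  exact this.false

theorem hasCompactOpenBasis : HasCompactOpenBasis c.space := by
  refine ⟨_, ?_, c.isTopologicalBasis_basic, ?_⟩
  · have : c.intervals ⊆ c.D ×ˢ c.D := fun _ hp => ⟨hp.1, hp.2.1⟩
    exact ((c.countable.prod c.countable).mono this).image _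
  · rintro _ ⟨p, hp, rfl⟩
    exact ⟨c.isCompact_basic hp, c.isOpen_basic hp⟩

theorem exists_finite_eq_biUnion_basic {K : Set c.space} (hK : IsCompactOpen K) :
    ∃ I ⊆ c.intervals, I.Finite ∧ K = ⋃ p ∈ I, c.basic p.1 p.2 := by
  have hb := c.isTopologicalBasis_basic
  rw [image_eq_range] at hb
  obtain ⟨s, hs, rfl⟩ :=
    eq_finite_iUnion_of_isTopologicalBasis_of_isCompact_open _ hb K hK.1 hK.2
  exact ⟨Subtype.val '' s, image_subset_iff.2 fun p _ => p.2, hs.image _, by rw [biUnion_image]⟩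

theorem shadow_eq_biUnion_Ico {K : Set c.space} (hK : IsCompactOpen K) :
    ∃ I ⊆ c.intervals, I.Finite ∧ c.shadow K = ⋃ p ∈ I, Ico p.1 p.2 := by
  obtain ⟨I, hIs, hI, rfl⟩ := c.exists_finite_eq_biUnion_basic hK
  refine ⟨I, hIs, hI, ?_⟩
  rw [shadow_biUnion]
  exact iUnion₂_congr fun p hp => c.shadow_basic (hIs hp)

theorem toReal_measure_mem_G {K : Set c.space} (hK : IsCompactOpen K) :
    (c.measure K).toReal ∈ c.G := by
  obtain ⟨I, hIs, hI, hK'⟩ := c.shadow_eq_biUnion_Ico hK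
  rw [c.measure_apply hK.2.measurableSet, hK']
  exact volume_real_biUnion_Ico_mem hI (fun p hp => (c.mem_D_iff.1 (hIs hp).1).1)
    fun p hp => (c.mem_D_iff.1 (hIs hp).2.1).1

theorem measure_lt_one {K : Set c.space} (hK : IsCompactOpen K) : c.measure K < 1 := by
  have := c.isProbabilityMeasure
  have := c.noncompactSpace
  have hKc : Kᶜ.Nonempty := nonempty_compl.2 fun h => noncompact_univ c.space (h ▸ hK.1)
  have := c.isFull Kᶜ hK.1.isClosed.isOpen_compl hKc
  rwa [prob_compl_eq_one_sub hK.2.measurableSet, tsub_pos_iff_lt] at this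

theorem toReal_measure_mem_D {K : Set c.space} (hK : IsCompactOpen K) :
    (c.measure K).toReal ∈ c.D := by
  refine c.mem_D_iff.2 ⟨c.toReal_measure_mem_G hK, ENNReal.toReal_nonneg, ?_⟩
  simpa using (ENNReal.toReal_lt_toReal (c.measure_lt_one hK).ne_top ENNReal.one_ne_top).2
    (c.measure_lt_one hK)

theorem sreal_eq : Sreal c.measure = c.D := by
  refine subset_antisymm (fun _ ⟨K, hK, _, hr⟩ => hr ▸ c.toReal_measure_mem_D hK)
    fun r hr => ?_
  rcases (c.D_subset hr).1.eq_or_lt with h | h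
  · exact ⟨∅, ⟨isCompact_empty, isOpen_empty⟩, by simp, by simp [← h]⟩
  have hp : ((0 : ℝ), r) ∈ c.intervals := ⟨c.zero_mem_D, hr, h⟩
  refine ⟨_, ⟨c.isCompact_basic hp, c.isOpen_basic hp⟩, ?_, ?_⟩ <;>
    rw [c.measure_basic hp]
  · exact ENNReal.ofReal_ne_top
  · simp [h.le]

theorem exists_measure_inter_basic_eq {V : Set c.space} (hV : IsCompactOpen V) {σ : ℝ}
    (hσD : σ ∈ c.D) (hσ : 0 < σ) (hσV : ENNReal.ofReal σ ≤ c.measure V) :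
    ∃ t, ((0 : ℝ), t) ∈ c.intervals ∧ c.measure (V ∩ c.basic 0 t) = ENNReal.ofReal σ := by
  obtain ⟨I, hIs, hI, hV'⟩ := c.shadow_eq_biUnion_Ico hV
  have hfin : ∀ s ⊆ c.shadow V, volume s ≠ ∞ := fun s hs =>
    measure_ne_top_of_subset (hs.trans inter_subset_right) (by simp)
  rw [c.measure_apply hV.2.measurableSet, ENNReal.ofReal_le_iff_le_toReal (hfin _ subset_rfl),
    hV'] at hσV
  obtain ⟨t, htG, p, hp, hpt, htp, hvol⟩ :=
    exists_mem_addSubgroup_volume_real_biUnion_Ico_inter_Iio_eq hI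
      (fun p hp => (c.mem_D_iff.1 (hIs hp).1).1) (fun p hp => (c.mem_D_iff.1 (hIs hp).2.1).1)
      (c.mem_D_iff.1 hσD).1 hσ hσV
  have ht0 : 0 < t := (c.D_subset (hIs hp).1).1.trans_lt hpt
  have ht : ((0 : ℝ), t) ∈ c.intervals :=
    ⟨c.zero_mem_D, c.mem_D_iff.2 ⟨htG, ht0.le, htp.trans_lt (c.D_subset (hIs hp).2.1).2⟩,
      ht0⟩
  have hcut : c.shadow (V ∩ c.basic 0 t) = c.shadow V ∩ Iio t := by
    rw [c.shadow_inter, c.shadow_basic ht]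
    ext y
    simp only [mem_inter_iff, mem_Ico, mem_Iio]
    exact ⟨fun h => ⟨h.1, h.2.2⟩, fun h => ⟨h.1, h.1.2.1, h.2⟩⟩
  refine ⟨t, ht, ?_⟩
  rw [c.measure_apply (hV.2.inter (c.isOpen_basic ht)).measurableSet, hcut, ← hvol, ← hV',
    ofReal_measureReal (hfin _ inter_subset_left)]

theorem good : Good c.measure := by
  intro V hV U hU hUV
  have := c.isProbabilityMeasure
  obtain ⟨σ, hσD, hσU⟩ : ∃ σ ∈ c.D, c.measure U = ENNReal.ofReal σ :=
    ⟨_, c.toReal_measure_mem_D hU, (ENNReal.ofReal_toReal (measure_ne_top _ _)).symm⟩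
  rcases (c.D_subset hσD).1.eq_or_lt with h0 | hσ
  · exact ⟨∅, empty_subset _, ⟨isCompact_empty, isOpen_empty⟩, by simp [hσU, ← h0]⟩
  obtain ⟨t, ht, hVt⟩ := c.exists_measure_inter_basic_eq hV hσD hσ (hσU ▸ hUV.le)
  exact ⟨V ∩ c.basic 0 t, inter_subset_left,
    ⟨hV.1.inter_right (c.isCompact_basic ht).isClosed, hV.2.inter (c.isOpen_basic ht)⟩,
    hVt.trans hσU.symm⟩

end Doubling

theorem stmt15_general (D : Set ℝ) (hcount : D.Countable)
    (hdense : Set.Ico (0 : ℝ) 1 ⊆ closure D)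
    (hgrp : ∃ G : AddSubgroup ℝ, D = {x : ℝ | x ∈ G ∧ x ∈ Set.Ico (0 : ℝ) 1}) :
    ∃ (X : Type) (tX : TopologicalSpace X) (mX : MeasurableSpace X),
      @BorelSpace X tX mX ∧ @MetrizableSpace X tX ∧ @LocallyCompactSpace X tX ∧
      @NoncompactSpace X tX ∧ @HasCompactOpenBasis X tX ∧ @NoIsolatedPoints X tX ∧
      ∃ μ : @Measure X mX,
        @IsProbabilityMeasure X mX μ ∧ @IsFull X tX mX μ ∧ @NonAtomic X mX μ ∧
        @Good X tX mX μ ∧ @Sreal X tX mX μ = D := by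
  obtain ⟨G, hG⟩ := hgrp
  obtain ⟨w, hw0, hws, hw⟩ := (hcount.mono sdiff_subset).exists_summable_pos_iff_mem
  let c : Doubling := ⟨G, D, hG, hcount, hdense, w, hw0, hws, hw⟩
  exact ⟨c.space, inferInstance, inferInstance, inferInstance, inferInstance,
    c.locallyCompactSpace, c.noncompactSpace, c.hasCompactOpenBasis, c.noIsolatedPoints,
    c.measure, c.isProbabilityMeasure, c.isFull, c.nonAtomic, c.good, c.sreal_eq⟩

theorem stmt15 (D : Set ℝ) (hD : D ⊆ Set.Ico (0 : ℝ) 1) (hcount : D.Countable)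
    (hdense : Set.Ico (0 : ℝ) 1 ⊆ closure D)
    (hgrp : ∃ G : AddSubgroup ℝ, D = {x : ℝ | x ∈ G ∧ x ∈ Set.Ico (0 : ℝ) 1}) :
    ∃ (X : Type) (tX : TopologicalSpace X) (mX : MeasurableSpace X),
      @BorelSpace X tX mX ∧ @MetrizableSpace X tX ∧ @LocallyCompactSpace X tX ∧
      @NoncompactSpace X tX ∧ @HasCompactOpenBasis X tX ∧ @NoIsolatedPoints X tX ∧
      ∃ μ : @Measure X mX,
        @IsProbabilityMeasure X mX μ ∧ @IsFull X tX mX μ ∧ @NonAtomic X mX μ ∧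
        @Good X tX mX μ ∧ @Sreal X tX mX μ = D :=
  stmt15_general D hcount hdense hgrp
end

section
/- Let μ be a good full non-atomic Borel measure on a non-compact locally compact Cantor set X, and let cX be a compactification of X with μ extended to cX by assigning measure zero to the remainder cX \ X. Then the extension of μ to cX is good if and only if S(μ|_{cX}) ∩ [0, μ(X)) = S(μ|_X). -/
open MeasureTheory Topology ENNReal TopologicalSpace

/-!
In a compact metrizable zero-dimensional space every open set is exhausted in measure by its
compact open subsets: closed sets approximate it from inside, and a closed set inside an open one
lies in a clopen one. So if `μ` is good on `cX`, a compact open set of measure `< μ X` is matched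
inside a compact open subset of `X`. Conversely, as `cX \ X` is null, a compact open `V ⊆ cX` can
be shrunk into `X` keeping its measure above any given value, and goodness on `X` applies once
every value `< μ X` is realized inside `X`. Values realized inside `X` are `< μ X` because `μ` is
full and a compact subset of the non-compact `X` leaves a non-empty open remainder.
-/

section

variable {Y : Type*} [TopologicalSpace Y] [MeasurableSpace Y] {μ : Measure Y} {X : Set Y}

lemma exists_isCompactOpen_subset_lt_measure_s16 [CompactSpace Y] [MetrizableSpace Y]
    [TotallyDisconnectedSpace Y] {O : Set Y} (hO : IsOpen O) {a : ℝ≥0∞}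
    (ha : a < μ O) : ∃ K : Set Y, IsCompactOpen K ∧ K ⊆ O ∧ a < μ K := by
  obtain ⟨F, hFO, hF, haF⟩ := Measure.InnerRegularWRT.of_pseudoMetrizableSpace μ hO a ha
  obtain ⟨C, hC, hFC, hCO⟩ := exists_clopen_of_closed_subset_open hF hO hFO
  exact ⟨C, ⟨hC.isClosed.isCompact, hC.isOpen⟩, hCO, haF.trans_le (measure_mono hFC)⟩

lemma IsFull.measure_lt_of_isClosed_ssubset [OpensMeasurableSpace Y] (hμ : IsFull μ)
    {U : Set Y} (hU : IsClosed U) (hX : IsOpen X) (hUX : U ⊂ X) (hμU : μ U ≠ ⊤) :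
    μ U < μ X := by
  have hpos : 0 < μ (X \ U) := hμ _ (hX.sdiff hU) (Set.sdiff_nonempty.mpr hUX.not_subset)
  calc μ U < μ U + μ (X \ U) := ENNReal.lt_add_right hμU hpos.ne'
    _ = μ X := by rw [measure_add_sdiff hU.measurableSet.nullMeasurableSet,
      Set.union_eq_self_of_subset_left hUX.subset]

lemma IsFull.SEOn_subset_SE_inter_Iio [T2Space Y] [OpensMeasurableSpace Y] (hμ : IsFull μ)
    (hXo : IsOpen X) (hXnc : ¬ IsCompact X) : SEOn μ X ⊆ SE μ ∩ Set.Iio (μ X) := by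
  rintro _ ⟨hv, U, hU, hUX, rfl⟩
  have hUX' : U ⊂ X := hUX.ssubset_of_ne fun h => hXnc (h ▸ hU.1)
  exact ⟨⟨hv, U, hU, rfl⟩, hμ.measure_lt_of_isClosed_ssubset hU.1.isClosed hXo hUX' hv⟩

variable [CompactSpace Y] [MetrizableSpace Y] [TotallyDisconnectedSpace Y]

lemma Good.SE_inter_Iio_subset_SEOn (hμ : Good μ) (hXo : IsOpen X) :
    SE μ ∩ Set.Iio (μ X) ⊆ SEOn μ X := by
  rintro _ ⟨⟨hv, U, hU, rfl⟩, hUX⟩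
  obtain ⟨V, hV, hVX, hUV⟩ := exists_isCompactOpen_subset_lt_measure_s16 hXo hUX
  obtain ⟨W, hWV, hW, hWU⟩ := hμ V hV U hU hUV
  exact ⟨hv, W, hW, hWV.trans hVX, hWU⟩

lemma good_of_SE_inter_Iio_subset_SEOn (hXo : IsOpen X) (hrem : μ Xᶜ = 0) (hgX : GoodOn μ X)
    (hS : SE μ ∩ Set.Iio (μ X) ⊆ SEOn μ X) : Good μ := by
  intro V hV U hU hUV
  have hUX : μ U < μ X := by
    calc μ U < μ V := hUV
      _ ≤ μ Set.univ := measure_mono (Set.subset_univ V)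
      _ = μ X := by rw [← measure_inter_conull hrem, Set.univ_inter]
  obtain ⟨-, U', hU', hU'X, hU'U⟩ := hS ⟨⟨hUV.ne_top, U, hU, rfl⟩, hUX⟩
  obtain ⟨V', hV', hV'VX, hUV'⟩ := exists_isCompactOpen_subset_lt_measure_s16 (hV.2.inter hXo)
    (hUV.trans_eq (measure_inter_conull hrem).symm)
  obtain ⟨W, hWV', hW, hWU'⟩ :=
    hgX U' V' hU' hU'X hV' (hV'VX.trans Set.inter_subset_right) (hU'U ▸ hUV')
  exact ⟨W, hWV'.trans (hV'VX.trans Set.inter_subset_left), hW, hWU'.trans hU'U⟩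

end

theorem stmt16_general {Y : Type*} [TopologicalSpace Y] [MeasurableSpace Y] [BorelSpace Y]
    [CompactSpace Y] [MetrizableSpace Y] [TotallyDisconnectedSpace Y]
    (X : Set Y) (hXo : IsOpen X) (hXnc : ¬ IsCompact X)
    (μ : Measure Y) (hrem : μ Xᶜ = 0) (hfull : IsFull μ)
    (hgX : GoodOn μ X) :
    Good μ ↔ SE μ ∩ Set.Iio (μ X) = SEOn μ X :=
  ⟨fun hg => (hg.SE_inter_Iio_subset_SEOn hXo).antisymm (hfull.SEOn_subset_SE_inter_Iio hXo hXnc),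
    fun hS => good_of_SE_inter_Iio_subset_SEOn hXo hrem hgX hS.subset⟩

theorem stmt16 {Y : Type*} [TopologicalSpace Y] [MeasurableSpace Y] [BorelSpace Y]
    [CompactSpace Y] [MetrizableSpace Y] [TotallyDisconnectedSpace Y]
    (hniY : NoIsolatedPoints Y)
    (X : Set Y) (hXo : IsOpen X) (hXd : Dense X) (hXnc : ¬ IsCompact X)
    (μ : Measure Y) (hrem : μ Xᶜ = 0) (hfull : IsFull μ) (hna : NonAtomic μ)
    (h0 : μ (DefectiveSet μ) = 0) (hgX : GoodOn μ X) :
    Good μ ↔ SE μ ∩ Set.Iio (μ X) = SEOn μ X :=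
  stmt16_general X hXo hXnc μ hrem hfull hgX
end

section
/- Let X be a non-compact locally compact Cantor set and μ a full non-atomic Borel probability measure on X. If there exists a compactification cX of X (with μ extended so μ(cX \ X) = 0) such that S(μ|_{cX}) = S(μ|_X) ∪ {1}, then 1 belongs to the additive subgroup of ℝ generated by S(μ|_X). -/
open MeasureTheory Topology ENNReal TopologicalSpace

/-! A clopen set `U` with `U` and `Uᶜ` nonempty splits the total mass as
`μ U + μ Uᶜ = 1`. Fullness makes both values less than `1`, so the hypothesis on the value
sets puts both in `S(μ|X)`, and `1` is their sum. -/

lemma NoIsolatedPoints.nontrivial {Y : Type*} [TopologicalSpace Y] [Nonempty Y]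
    (h : NoIsolatedPoints Y) : Nontrivial Y := by
  obtain ⟨y⟩ := ‹Nonempty Y›
  by_contra hY
  rw [not_nontrivial_iff_subsingleton] at hY
  have hy : ({y} : Set Y) = Set.univ := Set.eq_univ_of_forall fun z => Subsingleton.elim z y
  exact h y (hy ▸ isOpen_univ)

lemma exists_isClopen_nonempty_compl_nonempty {Y : Type*} [TopologicalSpace Y]
    [TotallySeparatedSpace Y] [Nontrivial Y] :
    ∃ U : Set Y, IsClopen U ∧ U.Nonempty ∧ Uᶜ.Nonempty := by
  obtain ⟨y, z, hyz⟩ := exists_pair_ne Y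
  obtain ⟨U, hU, hyU, hzU⟩ := exists_isClopen_of_totally_separated hyz
  exact ⟨U, hU, ⟨y, hyU⟩, ⟨z, hzU⟩⟩

lemma IsClopen.isCompactOpen {Y : Type*} [TopologicalSpace Y] [CompactSpace Y] {U : Set Y}
    (hU : IsClopen U) : IsCompactOpen U :=
  ⟨hU.isClosed.isCompact, hU.isOpen⟩

lemma IsClopen.measureReal_mem_Sreal {Y : Type*} [TopologicalSpace Y] [MeasurableSpace Y]
    [CompactSpace Y] {μ : Measure Y} [IsFiniteMeasure μ] {U : Set Y} (hU : IsClopen U) :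
    μ.real U ∈ Sreal μ :=
  ⟨U, hU.isCompactOpen, measure_ne_top μ U, rfl⟩

lemma IsFull.measureReal_lt_one {Y : Type*} [TopologicalSpace Y] [MeasurableSpace Y]
    {μ : Measure Y} [IsProbabilityMeasure μ] (hfull : IsFull μ) {U : Set Y}
    (hU : MeasurableSet U) (hUc : IsOpen Uᶜ) (hne : Uᶜ.Nonempty) : μ.real U < 1 := by
  have hpos : 0 < μ.real Uᶜ :=
    ENNReal.toReal_pos (hfull Uᶜ hUc hne).ne' (measure_ne_top μ Uᶜ)
  linarith [probReal_add_probReal_compl (μ := μ) hU]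

theorem stmt17_general {Y : Type*} [TopologicalSpace Y] [MeasurableSpace Y] [BorelSpace Y]
    [CompactSpace Y] [MetrizableSpace Y] [TotallyDisconnectedSpace Y]
    (hniY : NoIsolatedPoints Y)
    (X : Set Y)
    (μ : Measure Y) [IsProbabilityMeasure μ]
    (hfull : IsFull μ)
    (hS : Sreal μ = SrealOn μ X ∪ {1}) :
    (1 : ℝ) ∈ AddSubgroup.closure (SrealOn μ X) := by
  have : Nonempty Y := nonempty_of_isProbabilityMeasure μ
  have : Nontrivial Y := hniY.nontrivial
  have : TotallySeparatedSpace Y := loc_compact_t2_tot_disc_iff_tot_sep.mp ‹_›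
  obtain ⟨U, hU, hUne, hUcne⟩ := exists_isClopen_nonempty_compl_nonempty (Y := Y)
  have mem_SrealOn {V : Set Y} (hV : IsClopen V) (hVc : Vᶜ.Nonempty) :
      μ.real V ∈ SrealOn μ X := by
    have hlt := hfull.measureReal_lt_one hV.isOpen.measurableSet hV.compl.isOpen hVc
    have hmem : μ.real V ∈ SrealOn μ X ∪ {1} := hS ▸ hV.measureReal_mem_Sreal
    exact hmem.resolve_right hlt.ne
  have hsum := probReal_add_probReal_compl (μ := μ) hU.isOpen.measurableSet
  rw [← hsum]
  exact add_mem (AddSubgroup.subset_closure (mem_SrealOn hU hUcne))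
    (AddSubgroup.subset_closure (mem_SrealOn hU.compl (by rwa [compl_compl])))

theorem stmt17 {Y : Type*} [TopologicalSpace Y] [MeasurableSpace Y] [BorelSpace Y]
    [CompactSpace Y] [MetrizableSpace Y] [TotallyDisconnectedSpace Y]
    (hniY : NoIsolatedPoints Y)
    (X : Set Y) (hXo : IsOpen X) (hXd : Dense X) (hXnc : ¬ IsCompact X)
    (μ : Measure Y) [IsProbabilityMeasure μ] (hrem : μ Xᶜ = 0)
    (hfull : IsFull μ) (hna : NonAtomic μ)
    (hS : Sreal μ = SrealOn μ X ∪ {1}) :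
    (1 : ℝ) ∈ AddSubgroup.closure (SrealOn μ X) :=
  stmt17_general hniY X μ hfull hS
end

section
/- Let μ be a good full non-atomic Borel probability measure on a non-compact locally compact Cantor set X. The extension of μ to the one-point (Alexandroff) compactification ωX (assigning measure zero to the point at infinity) is good if and only if 1 lies in the additive subgroup of ℝ generated by S(μ|_X). -/
open MeasureTheory Topology ENNReal TopologicalSpace

/-!
The values of a good measure on compact open sets are closed under differences and under sums
that stay below `1`, so a number in `[0, 1)` of the group generated by `S(μ)` already lies in
`S(μ)`: write it as a difference of two sums of values and cancel terms pairwise. A compact open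
subset of `ωX` containing `∞` is the complement of a compact open `K ⊆ X` and has measure
`1 - μ K`. If `1` lies in the group, these numbers are values of `μ`, and goodness of `μ`
transfers to `ωX`. Conversely, goodness of the extension yields inside a compact open `K` with
`μ K > 1/2` a compact open set of measure `1 - μ K`, which writes `1` as a sum of two values.
-/

open Set

theorem AddSubgroup.exists_list_sum_sub_sum_of_mem_closure {G : Type*} [AddCommGroup G]
    {S : Set G} {x : G} (hx : x ∈ AddSubgroup.closure S) :
    ∃ l₁ l₂ : List G, (∀ y ∈ l₁, y ∈ S) ∧ (∀ y ∈ l₂, y ∈ S) ∧ x = l₁.sum - l₂.sum := by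
  induction hx using AddSubgroup.closure_induction with
  | mem y hy => exact ⟨[y], [], by simpa using hy, by simp, by simp⟩
  | zero => exact ⟨[], [], by simp, by simp, by simp⟩
  | add y z _ _ hy hz =>
    obtain ⟨l₁, l₂, h₁, h₂, rfl⟩ := hy
    obtain ⟨m₁, m₂, k₁, k₂, rfl⟩ := hz
    refine ⟨l₁ ++ m₁, l₂ ++ m₂, ?_, ?_, by simp only [List.sum_append]; abel⟩ <;>
      simp_all [or_imp]
  | neg y _ hy =>
    obtain ⟨l₁, l₂, h₁, h₂, rfl⟩ := hy
    exact ⟨l₂, l₁, h₂, h₁, by abel⟩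

theorem sum_sub_sum_mem {S : Set ℝ} (h0 : 0 ∈ S) (hnonneg : ∀ a ∈ S, 0 ≤ a)
    (hsub : ∀ a ∈ S, ∀ b ∈ S, b ≤ a → a - b ∈ S)
    (hadd : ∀ a ∈ S, ∀ b ∈ S, a + b < 1 → a + b ∈ S) :
    ∀ {l₁ l₂ : List ℝ}, (∀ x ∈ l₁, x ∈ S) → (∀ x ∈ l₂, x ∈ S) →
      0 ≤ l₁.sum - l₂.sum → l₁.sum - l₂.sum < 1 → l₁.sum - l₂.sum ∈ S
  | [], l₂, _, h₂, hge, _ => by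
    have : 0 ≤ l₂.sum := List.sum_nonneg fun x hx => hnonneg x (h₂ x hx)
    rwa [show [].sum - l₂.sum = 0 by rw [List.sum_nil] at hge ⊢; linarith]
  | a :: l₁, [], h₁, _, _, hlt => by
    obtain ⟨ha, h₁⟩ := List.forall_mem_cons.mp h₁
    have hl₁ : 0 ≤ l₁.sum := List.sum_nonneg fun x hx => hnonneg x (h₁ x hx)
    simp only [List.sum_cons, List.sum_nil, sub_zero] at hlt ⊢
    have := sum_sub_sum_mem h0 hnonneg hsub hadd (l₂ := []) h₁ (by simp)
      (by rwa [List.sum_nil, sub_zero]) (by rw [List.sum_nil, sub_zero]; linarith [hnonneg a ha])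
    exact hadd a ha _ (by rwa [List.sum_nil, sub_zero] at this) hlt
  | a :: l₁, b :: l₂, h₁, h₂, hge, hlt => by
    obtain ⟨ha, h₁⟩ := List.forall_mem_cons.mp h₁
    obtain ⟨hb, h₂⟩ := List.forall_mem_cons.mp h₂
    by_cases hba : b ≤ a
    · have key : ((a - b) :: l₁).sum - l₂.sum = (a :: l₁).sum - (b :: l₂).sum := by
        simp only [List.sum_cons]; ring
      rw [← key] at hge hlt ⊢
      exact sum_sub_sum_mem h0 hnonneg hsub hadd
        (List.forall_mem_cons.mpr ⟨hsub a ha b hb hba, h₁⟩) h₂ hge hlt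
    · have key : l₁.sum - ((b - a) :: l₂).sum = (a :: l₁).sum - (b :: l₂).sum := by
        simp only [List.sum_cons]; ring
      rw [← key] at hge hlt ⊢
      exact sum_sub_sum_mem h0 hnonneg hsub hadd
        h₁ (List.forall_mem_cons.mpr ⟨hsub b hb a ha (le_of_not_ge hba), h₂⟩) hge hlt
termination_by l₁ l₂ => l₁.length + l₂.length

theorem mem_of_mem_addSubgroupClosure {S : Set ℝ} (h0 : 0 ∈ S) (hnonneg : ∀ a ∈ S, 0 ≤ a)
    (hsub : ∀ a ∈ S, ∀ b ∈ S, b ≤ a → a - b ∈ S)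
    (hadd : ∀ a ∈ S, ∀ b ∈ S, a + b < 1 → a + b ∈ S) {x : ℝ}
    (hx : x ∈ AddSubgroup.closure S) (hx0 : 0 ≤ x) (hx1 : x < 1) : x ∈ S := by
  obtain ⟨l₁, l₂, h₁, h₂, rfl⟩ := AddSubgroup.exists_list_sum_sub_sum_of_mem_closure hx
  exact sum_sub_sum_mem h0 hnonneg hsub hadd h₁ h₂ hx0 hx1

theorem MeasureTheory.measureReal_lt_measureReal_iff {α : Type*} [MeasurableSpace α]
    {μ : Measure α} [IsFiniteMeasure μ] {s t : Set α} : μ.real s < μ.real t ↔ μ s < μ t :=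
  ENNReal.toReal_lt_toReal (measure_ne_top μ s) (measure_ne_top μ t)

section CompactOpen

variable {X : Type*} [TopologicalSpace X]

theorem IsCompactOpen.image_coe {K : Set X} (hK : IsCompactOpen K) :
    IsCompactOpen ((↑) '' K : Set (OnePoint X)) :=
  ⟨hK.1.image OnePoint.continuous_coe, OnePoint.isOpen_image_coe.2 hK.2⟩

theorem IsCompactOpen.compl_image_coe [T2Space X] {K : Set X} (hK : IsCompactOpen K) :
    IsCompactOpen ((↑) '' K : Set (OnePoint X))ᶜ :=
  ⟨(OnePoint.isOpen_image_coe.2 hK.2).isClosed_compl.isCompact,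
    OnePoint.isOpen_compl_image_coe.2 ⟨hK.1.isClosed, hK.1⟩⟩

theorem IsCompactOpen.preimage_coe {S : Set (OnePoint X)} (hS : IsCompactOpen S)
    (h : OnePoint.infty ∉ S) : IsCompactOpen ((↑) ⁻¹' S : Set X) :=
  ⟨(OnePoint.isOpenEmbedding_coe.isInducing.isCompact_preimage_iff
    (OnePoint.compl_infty ▸ subset_compl_singleton_iff.2 h)).2 hS.1,
    hS.2.preimage OnePoint.continuous_coe⟩

theorem IsCompactOpen.compl_preimage_coe [T2Space X] [LocallyCompactSpace X]
    {S : Set (OnePoint X)} (hS : IsCompactOpen S) (h : OnePoint.infty ∈ S) :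
    IsCompactOpen ((↑) ⁻¹' S : Set X)ᶜ :=
  ⟨((OnePoint.isOpen_iff_of_mem' h).1 hS.2).1,
    ((OnePoint.isClosed_iff_of_mem h).1 hS.1.isClosed).isOpen_compl⟩

variable [MeasurableSpace X] {μ : Measure X}

variable (μ) in
theorem HasCompactOpenBasis.exists_isCompactOpen_subset_lt
    (hB : HasCompactOpenBasis X) {v : Set X} (hv : IsOpen v) {r : ℝ≥0∞}
    (hr : r < μ v) : ∃ K : Set X, IsCompactOpen K ∧ K ⊆ v ∧ r < μ K := by
  obtain ⟨B, hBc, hBb, hBco⟩ := hB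
  -- finite unions of basic sets inside `v` form a countable directed family with union `v`
  let F : Set (Set X) := {s ∈ B | s ⊆ v}
  have : Countable F := (hBc.mono (sep_subset _ _)).to_subtype
  let K : Finset F → Set X := fun t => ⋃ s ∈ t, (s : Set X)
  have hdir : Directed (· ⊆ ·) K := fun t t' =>
    ⟨t ∪ t', biUnion_subset_biUnion_left (by simp), biUnion_subset_biUnion_left (by simp)⟩
  have hKv : ⋃ t, K t = v := by
    refine Subset.antisymm (iUnion_subset fun t => iUnion₂_subset fun s _ => s.2.2) ?_
    rw [hBb.open_eq_sUnion' hv]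
    exact sUnion_subset fun s hs x hx =>
      mem_iUnion.2 ⟨{⟨s, hs⟩}, mem_iUnion₂.2 ⟨⟨s, hs⟩, Finset.mem_singleton_self _, hx⟩⟩
  rw [← hKv, hdir.measure_iUnion] at hr
  obtain ⟨t, ht⟩ := lt_iSup_iff.mp hr
  exact ⟨K t, ⟨t.finite_toSet.isCompact_biUnion fun s _ => (hBco s s.2.1).1,
    isOpen_biUnion fun s _ => (hBco s s.2.1).2⟩, hKv ▸ subset_iUnion K t, ht⟩

theorem Good.exists_subset_isOpen_measure_eq (hB : HasCompactOpenBasis X) (hg : Good μ)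
    {A v : Set X} (hA : IsCompactOpen A) (hv : IsOpen v) (hAv : μ A < μ v) :
    ∃ W ⊆ v, IsCompactOpen W ∧ μ W = μ A := by
  obtain ⟨K, hK, hKv, hAK⟩ := hB.exists_isCompactOpen_subset_lt μ hv hAv
  obtain ⟨W, hWK, hW, hWA⟩ := hg K hK A hA hAK
  exact ⟨W, hWK.trans hKv, hW, hWA⟩

theorem mem_sreal_iff [IsFiniteMeasure μ] {a : ℝ} :
    a ∈ Sreal μ ↔ ∃ U : Set X, IsCompactOpen U ∧ μ.real U = a :=
  ⟨fun ⟨U, hU, _, h⟩ => ⟨U, hU, h⟩, fun ⟨U, hU, h⟩ => ⟨U, hU, measure_ne_top μ U, h⟩⟩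

theorem IsCompactOpen.measureReal_mem_sreal [IsFiniteMeasure μ] {U : Set X}
    (hU : IsCompactOpen U) : μ.real U ∈ Sreal μ :=
  mem_sreal_iff.2 ⟨U, hU, rfl⟩

theorem zero_mem_sreal [IsFiniteMeasure μ] : (0 : ℝ) ∈ Sreal μ :=
  mem_sreal_iff.2 ⟨∅, ⟨isCompact_empty, isOpen_empty⟩, measureReal_empty⟩

theorem nonneg_of_mem_sreal {a : ℝ} (ha : a ∈ Sreal μ) : 0 ≤ a := by
  obtain ⟨A, -, -, rfl⟩ := ha
  exact ENNReal.toReal_nonneg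

variable [OpensMeasurableSpace X]

variable (μ) in
theorem HasCompactOpenBasis.exists_isCompactOpen_measure_compl_lt
    (hB : HasCompactOpenBasis X) [IsProbabilityMeasure μ] :
    ∃ K : Set X, IsCompactOpen K ∧ μ Kᶜ < μ K := by
  obtain ⟨K, hK, -, hK2⟩ := hB.exists_isCompactOpen_subset_lt μ isOpen_univ
    (r := ENNReal.ofReal 2⁻¹) (by simp)
  have hK2 : 2⁻¹ < μ.real K :=
    (ENNReal.ofReal_lt_iff_lt_toReal (by norm_num) (measure_ne_top μ K)).1 hK2
  refine ⟨K, hK, measureReal_lt_measureReal_iff.1 ?_⟩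
  rw [probReal_compl_eq_one_sub hK.2.measurableSet]
  linarith

theorem one_mem_closure_sreal_of_measure_eq_compl [IsProbabilityMeasure μ] {K W : Set X}
    (hK : IsCompactOpen K) (hW : IsCompactOpen W) (hWK : μ W = μ Kᶜ) :
    (1 : ℝ) ∈ AddSubgroup.closure (Sreal μ) := by
  have hsum : μ.real W + μ.real K = 1 := by
    rw [show μ.real W = μ.real Kᶜ from congrArg ENNReal.toReal hWK,
      probReal_compl_eq_one_sub hK.2.measurableSet, sub_add_cancel]
  rw [← hsum]
  exact add_mem (AddSubgroup.subset_closure hW.measureReal_mem_sreal)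
    (AddSubgroup.subset_closure hK.measureReal_mem_sreal)

variable [T2Space X]

theorem Good.sub_mem_sreal [IsFiniteMeasure μ] (hg : Good μ) {a b : ℝ} (ha : a ∈ Sreal μ)
    (hb : b ∈ Sreal μ) (hba : b ≤ a) : a - b ∈ Sreal μ := by
  obtain ⟨A, hA, rfl⟩ := mem_sreal_iff.1 ha
  obtain ⟨B, hB, rfl⟩ := mem_sreal_iff.1 hb
  obtain hBA | hBA := hba.eq_or_lt
  · rw [hBA, sub_self]
    exact zero_mem_sreal
  · obtain ⟨W, hWA, hW, hWB⟩ := hg A hA B hB (measureReal_lt_measureReal_iff.1 hBA)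
    have hWB : μ.real W = μ.real B := congrArg ENNReal.toReal hWB
    rw [← hWB, ← measureReal_sdiff hWA hW.2.measurableSet]
    exact IsCompactOpen.measureReal_mem_sreal ⟨hA.1.diff hW.2, hA.2.sdiff hW.1.isClosed⟩

theorem Good.add_mem_sreal [IsProbabilityMeasure μ] (hB : HasCompactOpenBasis X)
    (hg : Good μ) {a b : ℝ} (ha : a ∈ Sreal μ) (hb : b ∈ Sreal μ) (hab : a + b < 1) :
    a + b ∈ Sreal μ := by
  obtain ⟨A, hA, rfl⟩ := mem_sreal_iff.1 ha
  obtain ⟨B, hB', rfl⟩ := mem_sreal_iff.1 hb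
  have hBA : μ.real B < μ.real Aᶜ := by
    rw [probReal_compl_eq_one_sub hA.2.measurableSet]
    linarith
  obtain ⟨W, hWA, hW, hWB⟩ := hg.exists_subset_isOpen_measure_eq hB hB'
    hA.1.isClosed.isOpen_compl (measureReal_lt_measureReal_iff.1 hBA)
  have hWB : μ.real W = μ.real B := congrArg ENNReal.toReal hWB
  rw [← hWB, ← measureReal_union (disjoint_compl_right.mono_right hWA) hW.2.measurableSet]
  exact IsCompactOpen.measureReal_mem_sreal ⟨hA.1.union hW.1, hA.2.union hW.2⟩

theorem Good.one_sub_mem_sreal [IsProbabilityMeasure μ] (hB : HasCompactOpenBasis X)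
    (hg : Good μ) (h1 : (1 : ℝ) ∈ AddSubgroup.closure (Sreal μ)) {a : ℝ}
    (ha : a ∈ Sreal μ) (ha0 : 0 < a) : 1 - a ∈ Sreal μ := by
  have ha1 : a ≤ 1 := by
    obtain ⟨A, -, rfl⟩ := mem_sreal_iff.1 ha
    exact measureReal_le_one
  refine mem_of_mem_addSubgroupClosure ?_ ?_ (fun a ha b hb => hg.sub_mem_sreal ha hb)
    (fun a ha b hb => hg.add_mem_sreal hB ha hb)
    (sub_mem h1 (AddSubgroup.subset_closure ha)) (by linarith) (by linarith)
  · exact zero_mem_sreal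
  · exact fun a ha => nonneg_of_mem_sreal ha

theorem Good.exists_isCompactOpen_measure_eq_preimage_coe [LocallyCompactSpace X]
    [IsProbabilityMeasure μ] (hB : HasCompactOpenBasis X) (hg : Good μ)
    (h1 : (1 : ℝ) ∈ AddSubgroup.closure (Sreal μ)) {S : Set (OnePoint X)}
    (hS : IsCompactOpen S) (hS1 : μ ((↑) ⁻¹' S) < 1) :
    ∃ A : Set X, IsCompactOpen A ∧ μ A = μ ((↑) ⁻¹' S) := by
  by_cases h : OnePoint.infty ∈ S
  · set u : Set X := (↑) ⁻¹' S
    have hu : MeasurableSet u := (hS.2.preimage OnePoint.continuous_coe).measurableSet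
    have hpos : 0 < μ.real uᶜ := ENNReal.toReal_pos
      (by rw [prob_compl_eq_one_sub hu]; exact (tsub_pos_of_lt hS1).ne') (measure_ne_top μ _)
    obtain ⟨A, hA, hAu⟩ := mem_sreal_iff.1 <|
      hg.one_sub_mem_sreal hB h1 (hS.compl_preimage_coe h).measureReal_mem_sreal hpos
    refine ⟨A, hA, (measureReal_eq_measureReal_iff).1 ?_⟩
    rw [hAu, probReal_compl_eq_one_sub hu, _root_.sub_sub_cancel]
  · exact ⟨_, hS.preimage_coe h, rfl⟩

end CompactOpen

theorem stmt18_general {X : Type*} [TopologicalSpace X] [MeasurableSpace X] [BorelSpace X]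
    [MetrizableSpace X] [LocallyCompactSpace X]
    (hB : HasCompactOpenBasis X)
    (μ : Measure X) [IsProbabilityMeasure μ]
    (hg : Good μ) :
    (∀ U V : Set (OnePoint X), IsCompactOpen U → IsCompactOpen V →
        μ ((fun x : X => (x : OnePoint X)) ⁻¹' U) <
          μ ((fun x : X => (x : OnePoint X)) ⁻¹' V) →
        ∃ W : Set (OnePoint X), W ⊆ V ∧ IsCompactOpen W ∧
          μ ((fun x : X => (x : OnePoint X)) ⁻¹' W) =
            μ ((fun x : X => (x : OnePoint X)) ⁻¹' U)) ↔
      (1 : ℝ) ∈ AddSubgroup.closure (Sreal μ) := by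
  have hpre : ∀ K : Set X, (↑) ⁻¹' ((↑) '' K : Set (OnePoint X)) = K :=
    fun K => preimage_image_eq K OnePoint.coe_injective
  constructor
  · intro hext
    obtain ⟨K, hK, hKc⟩ := hB.exists_isCompactOpen_measure_compl_lt μ
    obtain ⟨W, hWK, hW, hWμ⟩ :=
      hext _ _ hK.compl_image_coe hK.image_coe (by rwa [preimage_compl, hpre])
    rw [preimage_compl, hpre] at hWμ
    exact one_mem_closure_sreal_of_measure_eq_compl hK
      (hW.preimage_coe fun h => OnePoint.infty_notMem_image_coe (hWK h)) hWμ
  · intro h1 U V hU hV hUV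
    obtain ⟨A, hA, hAU⟩ :=
      hg.exists_isCompactOpen_measure_eq_preimage_coe hB h1 hU (hUV.trans_le prob_le_one)
    obtain ⟨W, hWV, hW, hWA⟩ := hg.exists_subset_isOpen_measure_eq hB hA
      (hV.2.preimage OnePoint.continuous_coe) (hAU ▸ hUV)
    exact ⟨(↑) '' W, image_subset_iff.2 hWV, hW.image_coe, by rw [hpre, hWA, hAU]⟩

theorem stmt18 {X : Type*} [TopologicalSpace X] [MeasurableSpace X] [BorelSpace X]
    [MetrizableSpace X] [LocallyCompactSpace X] [TotallyDisconnectedSpace X]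
    [NoncompactSpace X] (hB : HasCompactOpenBasis X) (hni : NoIsolatedPoints X)
    (μ : Measure X) [IsProbabilityMeasure μ] (hfull : IsFull μ)
    (hna : NonAtomic μ) (hg : Good μ) :
    (∀ U V : Set (OnePoint X), IsCompactOpen U → IsCompactOpen V →
        μ ((fun x : X => (x : OnePoint X)) ⁻¹' U) <
          μ ((fun x : X => (x : OnePoint X)) ⁻¹' V) →
        ∃ W : Set (OnePoint X), W ⊆ V ∧ IsCompactOpen W ∧
          μ ((fun x : X => (x : OnePoint X)) ⁻¹' W) =
            μ ((fun x : X => (x : OnePoint X)) ⁻¹' U)) ↔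
      (1 : ℝ) ∈ AddSubgroup.closure (Sreal μ) :=
  stmt18_general hB μ hg
end
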